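/- arXiv:1608.05352 — 7 statements merged into one kernel-verified Lean document; each statement's English description precedes it below -/
import Mathlib

section
/- Every forest (acyclic graph) can be edge-decomposed into two star forests, i.e., two spanning subgraphs each of which is a disjoint union of stars. -/
/-!
Root every component of the forest and let `depth v` be the distance from `v` to its root.
Adjacent vertices have depths differing by one, and every vertex has at most one neighbour
(its parent) of smaller depth. Colour each edge by the parity of the depth of its parent
endpoint. In one colour class, a vertex `v` either has the class's parity, and then all its
edges in the class go to its children, which have no further edges in the class; or it does
not, and then its only edge in the class goes to its parent. So every path in a colour class
has at most two edges, and each class is a star forest.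
-/

/-- A star forest: an acyclic graph with no path on 3 edges,
i.e. every component is a star. -/
def IsStarForest {V : Type*} (S : SimpleGraph V) : Prop :=
  S.IsAcyclic ∧ ∀ u v w x : V, S.Adj u v → S.Adj v w → S.Adj w x → u = w ∨ v = x

namespace SimpleGraph

variable {V : Type*} {G : SimpleGraph V} {r u v w : V}

lemma IsAcyclic.eq_of_adj_of_dist_add_one (hG : G.IsAcyclic) (hr : G.Reachable r v)
    (hu : G.Adj u v) (hw : G.Adj w v) (hdu : G.dist r u + 1 = G.dist r v)
    (hdw : G.dist r w + 1 = G.dist r v) : u = w := by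
  have geodesic_through {y : V} (hy : G.Adj y v) (hdy : G.dist r y + 1 = G.dist r v) :
      ∃ p : G.Walk r v, p.IsPath ∧ p.penultimate = y := by
    obtain ⟨q, hq⟩ := (hr.trans hy.symm.reachable).exists_walk_length_eq_dist
    refine ⟨q.concat hy, (q.concat hy).isPath_of_length_eq_dist ?_, q.penultimate_concat hy⟩
    rw [Walk.length_concat, hq, hdy]
  obtain ⟨p, hp, rfl⟩ := geodesic_through hu hdu
  obtain ⟨q, hq, rfl⟩ := geodesic_through hw hdw
  rw [Subtype.mk.inj ((hG.subsingleton_path r v).elim ⟨p, hp⟩ ⟨q, hq⟩)]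

noncomputable def depth (G : SimpleGraph V) (v : V) : ℕ :=
  G.dist (G.connectedComponentMk v).out v

lemma reachable_out_connectedComponentMk (G : SimpleGraph V) (v : V) :
    G.Reachable (G.connectedComponentMk v).out v :=
  ConnectedComponent.exact (G.connectedComponentMk v).out_eq

lemma depth_eq_dist_of_adj (h : G.Adj u v) :
    G.depth u = G.dist (G.connectedComponentMk v).out u := by
  rw [depth, ConnectedComponent.sound h.reachable]

lemma IsAcyclic.depth_eq_depth_add_one_of_adj (hG : G.IsAcyclic) (h : G.Adj u v) :
    G.depth u = G.depth v + 1 ∨ G.depth v = G.depth u + 1 := by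
  rw [depth_eq_dist_of_adj h, depth]
  exact (hG.dist_eq_dist_add_one_of_adj_of_reachable _ h.symm
    (G.reachable_out_connectedComponentMk v)).symm

lemma IsAcyclic.eq_of_adj_of_depth_add_one (hG : G.IsAcyclic) (hu : G.Adj u v)
    (hw : G.Adj w v) (hdu : G.depth u + 1 = G.depth v) (hdw : G.depth w + 1 = G.depth v) :
    u = w := by
  rw [depth_eq_dist_of_adj hu] at hdu
  rw [depth_eq_dist_of_adj hw] at hdw
  exact hG.eq_of_adj_of_dist_add_one (G.reachable_out_connectedComponentMk v) hu hw hdu hdw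

noncomputable def depthParityPart (G : SimpleGraph V) (b : ℕ) : SimpleGraph V where
  Adj u v := G.Adj u v ∧ min (G.depth u) (G.depth v) % 2 = b
  symm := ⟨fun _ _ h => ⟨h.1.symm, min_comm (G.depth _) _ ▸ h.2⟩⟩
  loopless := ⟨fun v h => G.loopless.irrefl v h.1⟩

lemma depthParityPart_le (G : SimpleGraph V) (b : ℕ) : G.depthParityPart b ≤ G :=
  fun _ _ h => h.1

lemma IsAcyclic.depthParityPart_adj {b : ℕ} (hG : G.IsAcyclic)
    (h : (G.depthParityPart b).Adj u v) :
    (G.depth u + 1 = G.depth v ∧ G.depth u % 2 = b) ∨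
      (G.depth v + 1 = G.depth u ∧ G.depth v % 2 = b) := by
  obtain ⟨hadj, hb⟩ := h
  rcases hG.depth_eq_depth_add_one_of_adj hadj with h | h <;> omega

lemma IsAcyclic.isStarForest_depthParityPart (hG : G.IsAcyclic) (b : ℕ) :
    IsStarForest (G.depthParityPart b) := by
  refine ⟨hG.anti (G.depthParityPart_le b), fun u v w x huv hvw hwx => ?_⟩
  rcases hG.depthParityPart_adj huv with ⟨hduv, hdu⟩ | ⟨hdvu, hdv⟩
  · left
    rcases hG.depthParityPart_adj hvw with ⟨_, _⟩ | ⟨hdwv, _⟩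
    · omega
    · exact hG.eq_of_adj_of_depth_add_one huv.1 hvw.1.symm hduv hdwv
  · right
    rcases hG.depthParityPart_adj hvw with ⟨hdvw, _⟩ | ⟨_, _⟩
    · rcases hG.depthParityPart_adj hwx with ⟨_, _⟩ | ⟨hdxw, _⟩
      · omega
      · exact hG.eq_of_adj_of_depth_add_one hvw.1 hwx.1.symm hdvw hdxw
    · omega

lemma disjoint_depthParityPart {b b' : ℕ} (h : b ≠ b') :
    Disjoint (G.depthParityPart b) (G.depthParityPart b') :=
  disjoint_left.mpr fun _ _ hb hb' => h (hb.2.symm.trans hb'.2)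

lemma depthParityPart_zero_sup_one (G : SimpleGraph V) :
    G.depthParityPart 0 ⊔ G.depthParityPart 1 = G := by
  ext u v
  refine ⟨fun h => h.elim And.left And.left, fun h => ?_⟩
  rcases Nat.mod_two_eq_zero_or_one (min (G.depth u) (G.depth v)) with hb | hb
  exacts [Or.inl ⟨h, hb⟩, Or.inr ⟨h, hb⟩]

end SimpleGraph

/-- Every forest can be edge-decomposed into two star forests. -/
theorem stmt_0 {V : Type*} (G : SimpleGraph V) (hG : G.IsAcyclic) :
    ∃ S₁ S₂ : SimpleGraph V, IsStarForest S₁ ∧ IsStarForest S₂ ∧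
      Disjoint S₁.edgeSet S₂.edgeSet ∧ S₁ ⊔ S₂ = G :=
  ⟨G.depthParityPart 0, G.depthParityPart 1, hG.isStarForest_depthParityPart 0,
    hG.isStarForest_depthParityPart 1,
    SimpleGraph.disjoint_edgeSet.mpr (SimpleGraph.disjoint_depthParityPart zero_ne_one),
    G.depthParityPart_zero_sup_one⟩
end

section
/- In an outing G = (S, T) (the union of an out star forest S and an out tree T on the same vertex set), every vertex has in-degree at most 2; moreover, in the edge 2-coloring Ext(c) induced by any vertex 2-coloring c, every vertex has in-degree at most 1 in each color. -/
variable {V : Type*}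

/-- An out star forest: a directed forest of stars, edges oriented from centers
to leaves. Heads of edges (leaves) have no out-edges and in-degree at most 1. -/
def IsOutStarForest (S : V → V → Prop) : Prop :=
  (∀ u v w : V, S u v → ¬ S v w) ∧ (∀ u v w : V, S u v → S w v → u = w)

/-- An out tree: a rooted (spanning) tree with all edges oriented away from the
root: every vertex is reachable from the root, the root has no in-edge, every
vertex has in-degree at most 1, and there are no loops. -/
def IsOutTree (T : V → V → Prop) : Prop :=
  ∃ r : V, (∀ v, Relation.ReflTransGen T r v) ∧ (∀ u, ¬ T u r) ∧
    (∀ u v w : V, T u v → T w v → u = w) ∧ (∀ v, ¬ T v v)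

/-- An outing: the edge-disjoint union of an out star forest `S` and an out tree `T`
on the same vertex set. -/
structure Outing (V : Type*) where
  S : V → V → Prop
  T : V → V → Prop
  hS : IsOutStarForest S
  hT : IsOutTree T
  hdisj : ∀ u v, ¬ (S u v ∧ T u v)

/-- An edge of the outing. -/
def Outing.edge (O : Outing V) (u v : V) : Prop := O.S u v ∨ O.T u v

/-- `v ∈ L(S)`: `v` is a leaf of the star forest. -/
def Outing.IsLeaf (O : Outing V) (v : V) : Prop := ∃ u, O.S u v

/-- `v ∈ C(S)`: `v` is a center of the star forest. -/
def Outing.IsCenter (O : Outing V) (v : V) : Prop := ¬ O.IsLeaf v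

/-- `v` is rebellious: it is the head of a star edge `uv` with `c u ≠ c v`. -/
def Outing.Rebellious (O : Outing V) (c : V → ℕ) (v : V) : Prop :=
  ∃ u, O.S u v ∧ c u ≠ c v

open Classical in
/-- The extension `Ext(c)` of a vertex 2-coloring `c` to the edges of the outing. -/
noncomputable def Outing.extColor (O : Outing V) (c : V → ℕ) (u v : V) : ℕ :=
  if O.S u v then c v
  else if O.IsCenter v ∧ c u = c v ∧ ¬ O.Rebellious c u then c v
  else 3 - c v

/-- `c` is tame: for every tree edge `uv` with rebellious head `v`, `c u ≠ c v`
and `u` is not rebellious. -/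
def Outing.Tame (O : Outing V) (c : V → ℕ) : Prop :=
  ∀ u v, O.T u v → O.Rebellious c v → c u ≠ c v ∧ ¬ O.Rebellious c u

/-- The center graph `Center(G)`: on the centers of `S`, with an edge `u → v` when
`uv ∈ E(T)` or there is a leaf `w` with `uw ∈ E(S)` and `wv ∈ E(T)`. -/
def Outing.CenterAdj (O : Outing V) (u v : V) : Prop :=
  u ≠ v ∧ O.IsCenter u ∧ O.IsCenter v ∧ (O.T u v ∨ ∃ w, O.S u w ∧ O.T w v)

/-- In an outing every vertex has in-degree at most 2, and under `Ext(c)` for any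
vertex 2-coloring `c` every vertex has in-degree at most 1 in each color. -/
theorem stmt_6 (O : Outing V) :
    (∀ v : V, ∃ a b : V, {u : V | O.edge u v} ⊆ {a, b}) ∧
    (∀ c : V → ℕ, (∀ x, c x = 1 ∨ c x = 2) →
      ∀ (v : V) (i : ℕ), {u : V | O.edge u v ∧ O.extColor c u v = i}.Subsingleton) := by
  classical
  obtain ⟨hSno, hSuniq⟩ := O.hS
  obtain ⟨r, hreach, hroot, hTuniq, hTloop⟩ := O.hT
  constructor
  · intro v
    by_cases hs : ∃ u, O.S u v
    · obtain ⟨a, ha⟩ := hs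
      by_cases ht : ∃ u, O.T u v
      · obtain ⟨b, hb⟩ := ht
        exact ⟨a, b, fun u hu => hu.elim (fun h => Or.inl (hSuniq _ _ _ h ha))
          (fun h => Or.inr (hTuniq _ _ _ h hb))⟩
      · exact ⟨a, a, fun u hu => hu.elim (fun h => Or.inl (hSuniq _ _ _ h ha))
          (fun h => absurd ⟨u, h⟩ ht)⟩
    · by_cases ht : ∃ u, O.T u v
      · obtain ⟨b, hb⟩ := ht
        exact ⟨b, b, fun u hu => hu.elim (fun h => absurd ⟨u, h⟩ hs)
          (fun h => Or.inl (hTuniq _ _ _ h hb))⟩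
      · exact ⟨v, v, fun u hu => hu.elim (fun h => absurd ⟨u, h⟩ hs)
          (fun h => absurd ⟨u, h⟩ ht)⟩
  · intro c hc v i u₁ hu₁ u₂ hu₂
    obtain ⟨he₁, hc₁⟩ := hu₁
    obtain ⟨he₂, hc₂⟩ := hu₂
    have key : ∀ s t : V, O.S s v → O.T t v → O.extColor c s v ≠ O.extColor c t v := by
      intro s t hs ht
      have hleaf : O.IsLeaf v := ⟨s, hs⟩
      have hst : ¬ O.S t v ∨ True := Or.inr trivial
      have e1 : O.extColor c s v = c v := by simp [Outing.extColor, hs]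
      have e2 : O.extColor c t v = 3 - c v := by
        by_cases hS' : O.S t v
        · exact absurd ⟨hS', ht⟩ (O.hdisj t v)
        · simp [Outing.extColor, hS', Outing.IsCenter, hleaf]
      rw [e1, e2]
      rcases hc v with h | h <;> omega
    rcases he₁ with h₁ | h₁ <;> rcases he₂ with h₂ | h₂
    · exact hSuniq _ _ _ h₁ h₂
    · exact absurd (hc₂ ▸ hc₁ : O.extColor c u₁ v = O.extColor c u₂ v) (key _ _ h₁ h₂)
    · exact absurd (hc₁ ▸ hc₂ : O.extColor c u₂ v = O.extColor c u₁ v) (key _ _ h₂ h₁)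
    · exact hTuniq _ _ _ h₁ h₂
end

section
/- Let G = (S,T) be an outing and let c be a tame vertex 2-coloring of G. Let P = v_0 v_1 ... v_k be a directed path in G all of whose edges are colored 1 in Ext(c), with v_0, v_k centers of S and all internal vertices v_1,...,v_{k-1} leaves of S. If c(v_0) = c(v_k), then k ≤ 2 and (v_0, v_k) is an edge of the center graph Center(G). If c(v_0) ≠ c(v_k), then k ≤ 3, c(v_0) = 1 and c(v_k) = 2. -/
variable {V : Type*}

/-- Characterization of monochromatic (color 1) directed paths in `Ext(c)` between
two centers whose internal vertices are leaves. -/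
theorem stmt_8 (O : Outing V) (c : V → ℕ) (hc : ∀ x, c x = 1 ∨ c x = 2)
    (htame : O.Tame c) (k : ℕ) (hk : 1 ≤ k) (v : ℕ → V)
    (hinj : ∀ i j, i ≤ k → j ≤ k → v i = v j → i = j)
    (hedge : ∀ i < k, O.edge (v i) (v (i + 1)))
    (hcol : ∀ i < k, O.extColor c (v i) (v (i + 1)) = 1)
    (h0 : O.IsCenter (v 0)) (hk' : O.IsCenter (v k))
    (hint : ∀ i, 0 < i → i < k → O.IsLeaf (v i)) :
    (c (v 0) = c (v k) → k ≤ 2 ∧ O.CenterAdj (v 0) (v k)) ∧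
    (c (v 0) ≠ c (v k) → k ≤ 3 ∧ c (v 0) = 1 ∧ c (v k) = 2) := by
  have hnotRebC : ∀ w, O.IsCenter w → ¬ O.Rebellious c w := by
    rintro w hw ⟨u, hu, -⟩; exact hw ⟨u, hu⟩
  have hne : v 0 ≠ v k := fun h => by have := hinj 0 k (by omega) le_rfl h; omega
  -- internal leaves reached by a tree edge from another leaf have color 2
  have leafCol : ∀ i, 1 ≤ i → i + 1 < k → c (v (i + 1)) = 2 := by
    intro i h1 h2
    obtain ⟨u, hu⟩ := hint i h1 (by omega)
    have hl : O.IsLeaf (v (i + 1)) := hint (i + 1) (by omega) h2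
    have hnS : ¬ O.S (v i) (v (i + 1)) := O.hS.1 u _ _ hu
    have hcoli := hcol i (by omega)
    unfold Outing.extColor at hcoli
    rw [if_neg hnS, if_neg (fun h => h.1 hl)] at hcoli
    rcases hc (v (i + 1)) with h | h <;> omega
  -- first, k ≤ 3
  have hk3 : k ≤ 3 := by
    by_contra h4
    push_neg at h4
    have hC2 : c (v (k - 1)) = 2 := by
      have := leafCol (k - 2) (by omega) (by omega)
      rwa [show k - 2 + 1 = k - 1 from by omega] at this
    have hC3 : c (v (k - 2)) = 2 := by
      have := leafCol (k - 3) (by omega) (by omega)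
      rwa [show k - 3 + 1 = k - 2 from by omega] at this
    have hE := hedge (k - 1) (by omega)
    rw [show k - 1 + 1 = k from by omega] at hE
    have hnS : ¬ O.S (v (k - 1)) (v k) := fun h => hk' ⟨_, h⟩
    have hT : O.T (v (k - 1)) (v k) := hE.resolve_left hnS
    have hcolk := hcol (k - 1) (by omega)
    rw [show k - 1 + 1 = k from by omega] at hcolk
    unfold Outing.extColor at hcolk
    rw [if_neg hnS] at hcolk
    by_cases hcond : O.IsCenter (v k) ∧ c (v (k - 1)) = c (v k) ∧ ¬ O.Rebellious c (v (k - 1))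
    · rw [if_pos hcond] at hcolk
      have := hcond.2.1
      omega
    · rw [if_neg hcond] at hcolk
      have hck : c (v k) = 2 := by rcases hc (v k) with h | h <;> omega
      have hreb : O.Rebellious c (v (k - 1)) := by
        by_contra hnr; exact hcond ⟨hk', by omega, hnr⟩
      obtain ⟨u2, hu2⟩ := hint (k - 2) (by omega) (by omega)
      have hnS2 : ¬ O.S (v (k - 2)) (v (k - 1)) := O.hS.1 u2 _ _ hu2
      have hE2 := hedge (k - 2) (by omega)
      rw [show k - 2 + 1 = k - 1 from by omega] at hE2
      have hT2 : O.T (v (k - 2)) (v (k - 1)) := hE2.resolve_left hnS2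
      have := (htame _ _ hT2 hreb).1
      omega
  interval_cases k
  · -- k = 1
    have hnS : ¬ O.S (v 0) (v 1) := fun h => hk' ⟨_, h⟩
    have hT : O.T (v 0) (v 1) := (hedge 0 (by omega)).resolve_left hnS
    have hcol0 : O.extColor c (v 0) (v 1) = 1 := hcol 0 (by omega)
    unfold Outing.extColor at hcol0
    rw [if_neg hnS] at hcol0
    by_cases hcond : O.IsCenter (v 1) ∧ c (v 0) = c (v 1) ∧ ¬ O.Rebellious c (v 0)
    · rw [if_pos hcond] at hcol0
      exact ⟨fun _ => ⟨by omega, hne, h0, hk', Or.inl hT⟩,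
        fun h => absurd hcond.2.1 h⟩
    · rw [if_neg hcond] at hcol0
      have hc1 : c (v 1) = 2 := by rcases hc (v 1) with h | h <;> omega
      have hne0 : c (v 0) ≠ c (v 1) := fun h => hcond ⟨hk', h, hnotRebC _ h0⟩
      have hc0 : c (v 0) = 1 := by rcases hc (v 0) with h | h <;> omega
      exact ⟨fun h => absurd h hne0, fun _ => ⟨by omega, hc0, hc1⟩⟩
  · -- k = 2
    have hl1 : O.IsLeaf (v 1) := hint 1 one_pos (by omega)
    have hnS2 : ¬ O.S (v 1) (v 2) := fun h => hk' ⟨_, h⟩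
    have hT2 : O.T (v 1) (v 2) := (hedge 1 (by omega)).resolve_left hnS2
    have hcol1 : O.extColor c (v 1) (v 2) = 1 := hcol 1 (by omega)
    unfold Outing.extColor at hcol1
    rw [if_neg hnS2] at hcol1
    have hcol0 : O.extColor c (v 0) (v 1) = 1 := hcol 0 (by omega)
    have hE0 : O.edge (v 0) (v 1) := hedge 0 (by omega)
    rcases hE0 with hS1 | hT1
    · -- first edge is a star edge
      unfold Outing.extColor at hcol0
      rw [if_pos hS1] at hcol0
      by_cases hcond : O.IsCenter (v 2) ∧ c (v 1) = c (v 2) ∧ ¬ O.Rebellious c (v 1)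
      · rw [if_pos hcond] at hcol1
        have h01 : c (v 0) = c (v 1) := by
          by_contra hne'; exact hcond.2.2 ⟨v 0, hS1, hne'⟩
        have heq : c (v 0) = c (v 2) := by have := hcond.2.1; omega
        exact ⟨fun _ => ⟨le_rfl, hne, h0, hk', Or.inr ⟨v 1, hS1, hT2⟩⟩,
          fun h => absurd heq h⟩
      · rw [if_neg hcond] at hcol1
        have hc2 : c (v 2) = 2 := by rcases hc (v 2) with h | h <;> omega
        rcases hc (v 0) with h00 | h00
        · exact ⟨fun heq => absurd heq (by omega), fun _ => ⟨by omega, h00, hc2⟩⟩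
        · exact ⟨fun _ => ⟨le_rfl, hne, h0, hk', Or.inr ⟨v 1, hS1, hT2⟩⟩,
            fun hne' => absurd (by omega : c (v 0) = c (v 2)) hne'⟩
    · -- first edge is a tree edge, into the leaf v 1
      have hnS1 : ¬ O.S (v 0) (v 1) := fun h => O.hdisj _ _ ⟨h, hT1⟩
      unfold Outing.extColor at hcol0
      rw [if_neg hnS1, if_neg (fun h => h.1 hl1)] at hcol0
      have hc1 : c (v 1) = 2 := by rcases hc (v 1) with h | h <;> omega
      by_cases hcond : O.IsCenter (v 2) ∧ c (v 1) = c (v 2) ∧ ¬ O.Rebellious c (v 1)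
      · rw [if_pos hcond] at hcol1
        exact absurd hcond.2.1 (by omega)
      · rw [if_neg hcond] at hcol1
        have hc2 : c (v 2) = 2 := by rcases hc (v 2) with h | h <;> omega
        have hreb : O.Rebellious c (v 1) := by
          by_contra hnr; exact hcond ⟨hk', by omega, hnr⟩
        have hne01 := (htame _ _ hT1 hreb).1
        have hc0 : c (v 0) = 1 := by rcases hc (v 0) with h | h <;> omega
        exact ⟨fun heq => absurd heq (by omega), fun _ => ⟨by omega, hc0, hc2⟩⟩
  · -- k = 3
    have hl1 : O.IsLeaf (v 1) := hint 1 one_pos (by omega)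
    have hc2 : c (v 2) = 2 := by
      have := leafCol 1 (by omega) (by omega); norm_num at this; exact this
    have hnS3 : ¬ O.S (v 2) (v 3) := fun h => hk' ⟨_, h⟩
    have hT3 : O.T (v 2) (v 3) := (hedge 2 (by omega)).resolve_left hnS3
    have hcol2 : O.extColor c (v 2) (v 3) = 1 := hcol 2 (by omega)
    unfold Outing.extColor at hcol2
    rw [if_neg hnS3] at hcol2
    by_cases hcond : O.IsCenter (v 3) ∧ c (v 2) = c (v 3) ∧ ¬ O.Rebellious c (v 2)
    · rw [if_pos hcond] at hcol2
      exact absurd hcond.2.1 (by omega)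
    · rw [if_neg hcond] at hcol2
      have hc3 : c (v 3) = 2 := by rcases hc (v 3) with h | h <;> omega
      have hreb2 : O.Rebellious c (v 2) := by
        by_contra hnr; exact hcond ⟨hk', by omega, hnr⟩
      obtain ⟨u1, hu1⟩ := hl1
      have hnS2 : ¬ O.S (v 1) (v 2) := O.hS.1 u1 _ _ hu1
      have hT2 : O.T (v 1) (v 2) := (hedge 1 (by omega)).resolve_left hnS2
      obtain ⟨hne12, hnr1⟩ := htame _ _ hT2 hreb2
      have hc1 : c (v 1) = 1 := by rcases hc (v 1) with h | h <;> omega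
      have hcol0 : O.extColor c (v 0) (v 1) = 1 := hcol 0 (by omega)
      have hE0 : O.edge (v 0) (v 1) := hedge 0 (by omega)
      rcases hE0 with hS1 | hT1
      · unfold Outing.extColor at hcol0
        rw [if_pos hS1] at hcol0
        have hc0 : c (v 0) = c (v 1) := by
          by_contra hne'; exact hnr1 ⟨v 0, hS1, hne'⟩
        exact ⟨fun heq => absurd heq (by omega), fun _ => ⟨le_rfl, by omega, hc3⟩⟩
      · have hnS1 : ¬ O.S (v 0) (v 1) := fun h => O.hdisj _ _ ⟨h, hT1⟩
        unfold Outing.extColor at hcol0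
        rw [if_neg hnS1, if_neg (fun h => h.1 ⟨u1, hu1⟩)] at hcol0
        exfalso; omega
end

section
/- Let G=(S,T) be an outing with a tame vertex 2-coloring c such that Res(c) is acyclic. Let d_T be the length of a longest vertex-monochromatic directed path in T whose vertices all lie in L(S), and for i∈{1,2} let d_i be the length of a longest directed path in Center(G) all of whose vertices have color i under Res(c). Then every monochromatic directed path in G under Ext(c) has length at most d_T + 2(d_1 + d_2) + 6. -/
variable {V : Type*}

/-- A directed cycle `v 0 → v 1 → ⋯ → v n = v 0` in the relation `R`. -/
def IsDicycle {V : Type*} (R : V → V → Prop) (n : ℕ) (v : ℕ → V) : Prop :=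
  1 ≤ n ∧ v n = v 0 ∧ (∀ i j, i < n → j < n → v i = v j → i = j) ∧
    ∀ i < n, R (v i) (v (i + 1))

namespace StmtAux

variable {O : Outing V} {c : V → ℕ} {v : ℕ → V} {n a : ℕ}

/-- Bundled hypotheses on a monochromatic path. -/
structure PH (O : Outing V) (c : V → ℕ) (v : ℕ → V) (n a : ℕ) : Prop where
  hc : ∀ x, c x = 1 ∨ c x = 2
  htame : O.Tame c
  hinj : ∀ i j, i ≤ n → j ≤ n → v i = v j → i = j
  hedge : ∀ i, i < n → O.edge (v i) (v (i + 1))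
  hcol : ∀ i, i < n → O.extColor c (v i) (v (i + 1)) = a
  ha : a = 1 ∨ a = 2

/-- Edge `i` of the path is a star edge. -/
abbrev SE (O : Outing V) (v : ℕ → V) (i : ℕ) : Prop := O.S (v i) (v (i + 1))

/-- Edge `i` of the path is a tree edge. -/
abbrev TEdge (O : Outing V) (v : ℕ → V) (i : ℕ) : Prop := O.T (v i) (v (i + 1))

/-- Edge `i` of the path is a "good" tree edge. -/
abbrev GE (O : Outing V) (c : V → ℕ) (v : ℕ → V) (i : ℕ) : Prop :=
  TEdge O v i ∧ (O.IsCenter (v (i + 1)) ∧ c (v i) = c (v (i + 1)) ∧ ¬ O.Rebellious c (v i))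

/-- Edge `i` of the path is a "bad" tree edge. -/
abbrev BE (O : Outing V) (c : V → ℕ) (v : ℕ → V) (i : ℕ) : Prop :=
  TEdge O v i ∧ ¬ (O.IsCenter (v (i + 1)) ∧ c (v i) = c (v (i + 1)) ∧ ¬ O.Rebellious c (v i))

open Classical in
lemma ext_of_T (O : Outing V) (c : V → ℕ) {u w : V} (h : O.T u w) :
    O.extColor c u w =
      if O.IsCenter w ∧ c u = c w ∧ ¬ O.Rebellious c u then c w else 3 - c w := by
  unfold Outing.extColor
  rw [if_neg (fun hs => O.hdisj u w ⟨hs, h⟩)]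

lemma Scolor (H : PH O c v n a) {i : ℕ} (hi : i < n) (h : SE O v i) : c (v (i + 1)) = a := by
  have h0 := H.hcol i hi
  unfold Outing.extColor at h0
  rwa [if_pos h] at h0

lemma Gfacts (H : PH O c v n a) {i : ℕ} (hi : i < n) (h : GE O c v i) :
    c (v i) = a ∧ c (v (i + 1)) = a ∧ O.IsCenter (v (i + 1)) := by
  have h0 := H.hcol i hi
  rw [ext_of_T O c h.1, if_pos h.2] at h0
  exact ⟨h.2.2.1.trans h0, h0, h.2.1⟩

lemma Bcolor (H : PH O c v n a) {i : ℕ} (hi : i < n) (h : BE O c v i) :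
    c (v (i + 1)) = 3 - a := by
  have h0 := H.hcol i hi
  rw [ext_of_T O c h.1, if_neg h.2] at h0
  rcases H.hc (v (i + 1)) with h1 | h1 <;> rcases H.ha with h2 | h2 <;> omega

lemma classify (H : PH O c v n a) {i : ℕ} (hi : i < n) :
    SE O v i ∨ GE O c v i ∨ BE O c v i := by
  rcases (H.hedge i hi : O.S (v i) (v (i + 1)) ∨ O.T (v i) (v (i + 1))) with h | h
  · exact Or.inl h
  · by_cases hg : O.IsCenter (v (i + 1)) ∧ c (v i) = c (v (i + 1)) ∧ ¬ O.Rebellious c (v i)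
    · exact Or.inr (Or.inl ⟨h, hg⟩)
    · exact Or.inr (Or.inr ⟨h, hg⟩)

lemma Scenter {i : ℕ} (h : SE O v i) : O.IsCenter (v i) := by
  rintro ⟨u, hu⟩
  exact O.hS.1 u (v i) (v (i + 1)) hu h

lemma Sleaf {i : ℕ} (h : SE O v i) : O.IsLeaf (v (i + 1)) := ⟨_, h⟩

lemma leafTE (H : PH O c v n a) {i : ℕ} (hi : i < n) (hl : O.IsLeaf (v i)) : TEdge O v i := by
  rcases (H.hedge i hi : O.S (v i) (v (i + 1)) ∨ O.T (v i) (v (i + 1))) with h | h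
  · obtain ⟨u, hu⟩ := hl
    exact absurd h (O.hS.1 u (v i) (v (i + 1)) hu)
  · exact h

lemma T_else (H : PH O c v n a) {i : ℕ} (hi : i < n) (hT : TEdge O v i)
    (hcb : c (v i) = 3 - a) : BE O c v i := by
  refine ⟨hT, fun hg => ?_⟩
  have h0 := H.hcol i hi
  rw [ext_of_T O c hT, if_pos hg] at h0
  have h1 := hg.2.1
  rcases H.ha with h2 | h2 <;> omega

lemma T_reb {i : ℕ} (hT : TEdge O v i) (hr : O.Rebellious c (v i)) : BE O c v i :=
  ⟨hT, fun hg => hg.2.2 hr⟩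

lemma B_center_reb (H : PH O c v n a) {i : ℕ} (hi : i < n) (hB : BE O c v i)
    (hcb : c (v i) = 3 - a) (hcen : O.IsCenter (v (i + 1))) : O.Rebellious c (v i) := by
  by_contra hnr
  exact hB.2 ⟨hcen, by rw [hcb, Bcolor H hi hB], hnr⟩

lemma reb_leaf {x : V} (h : O.Rebellious c x) : O.IsLeaf x := ⟨h.choose, h.choose_spec.1⟩

/-- Terminal leaf-run bound: from a non-rebellious leaf of color `3-a` on, the
path stays in leaves of color `3-a`, hence has length at most `dT`. -/
lemma leafrun (H : PH O c v n a) (dT : ℕ)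
    (hdT : ∀ (N : ℕ) (w : ℕ → V), (∀ i j, i ≤ N → j ≤ N → w i = w j → i = j) →
      (∀ i < N, O.T (w i) (w (i + 1))) → (∀ i ≤ N, O.IsLeaf (w i)) →
      (∀ i ≤ N, c (w i) = c (w 0)) → N ≤ dT)
    (p : ℕ) (hpn : p ≤ n) (hlf : O.IsLeaf (v p)) (hcb : c (v p) = 3 - a)
    (hnreb : ¬ O.Rebellious c (v p)) : n ≤ p + dT := by
  have claim : ∀ k, p ≤ k → k ≤ n →
      (O.IsLeaf (v k) ∧ c (v k) = 3 - a ∧ (k < n → ¬ O.IsCenter (v (k + 1)))) := by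
    intro k hk
    induction k, hk using Nat.le_induction with
    | base =>
      intro _
      refine ⟨hlf, hcb, fun hn hcen => ?_⟩
      exact hnreb (B_center_reb H hn (T_else H hn (leafTE H hn hlf) hcb) hcb hcen)
    | succ k hk IH =>
      intro hk1
      obtain ⟨hl, hck, hg⟩ := IH (by omega)
      have hkn : k < n := by omega
      have hB : BE O c v k := T_else H hkn (leafTE H hkn hl) hck
      have hlk1 : O.IsLeaf (v (k + 1)) := not_not.mp (hg hkn)
      have hck1 : c (v (k + 1)) = 3 - a := Bcolor H hkn hB
      refine ⟨hlk1, hck1, fun hn1 hcen => ?_⟩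
      have hB1 : BE O c v (k + 1) := T_else H hn1 (leafTE H hn1 hlk1) hck1
      have hr := B_center_reb H hn1 hB1 hck1 hcen
      exact (H.htame _ _ hB.1 hr).1 (hck.trans hck1.symm)
  have hN := hdT (n - p) (fun t => v (p + t))
    (fun i j hi hj he => by
      have := H.hinj (p + i) (p + j) (by omega) (by omega) he; omega)
    (fun i hi => leafTE H (i := p + i) (by omega) (claim (p + i) (by omega) (by omega)).1)
    (fun i hi => (claim (p + i) (by omega) (by omega)).1)
    (fun i hi => by
      show c (v (p + i)) = c (v (p + 0))
      rw [(claim (p + i) (by omega) (by omega)).2.1]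
      rw [(claim (p + 0) (by omega) (by omega)).2.1])
  omega

open Classical in
/-- Enumeration of the good-edge indices of the initial segment. -/
noncomputable def aidx (G : ℕ → Prop) (i0 : ℕ) : ℕ → ℕ
  | 0 => i0
  | t + 1 => if G (aidx G i0 t + 1) then aidx G i0 t + 1 else aidx G i0 t + 2

lemma aidx_zero (G : ℕ → Prop) (i0 : ℕ) : aidx G i0 0 = i0 := rfl

open Classical in
lemma aidx_succ (G : ℕ → Prop) (i0 t : ℕ) :
    aidx G i0 (t + 1) =
      if G (aidx G i0 t + 1) then aidx G i0 t + 1 else aidx G i0 t + 2 := by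
  rw [aidx]

lemma aidx_lt_succ (G : ℕ → Prop) (i0 t : ℕ) : aidx G i0 t < aidx G i0 (t + 1) := by
  rw [aidx_succ]; split <;> omega

lemma aidx_le_succ (G : ℕ → Prop) (i0 t : ℕ) : aidx G i0 (t + 1) ≤ aidx G i0 t + 2 := by
  rw [aidx_succ]; split <;> omega

lemma aidx_mono (G : ℕ → Prop) (i0 : ℕ) : StrictMono (aidx G i0) :=
  strictMono_nat_of_lt_succ (fun t => aidx_lt_succ G i0 t)

lemma aidx_lb (G : ℕ → Prop) (i0 : ℕ) : ∀ t, i0 + t ≤ aidx G i0 t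
  | 0 => le_of_eq rfl
  | t + 1 => by
      have h1 := aidx_lb G i0 t
      have h2 := aidx_lt_succ G i0 t
      omega

lemma aidx_ub (G : ℕ → Prop) (i0 : ℕ) : ∀ t, aidx G i0 t ≤ i0 + 2 * t
  | 0 => le_of_eq rfl
  | t + 1 => by
      have h1 := aidx_ub G i0 t
      have h2 := aidx_le_succ G i0 t
      omega

/-- The chain extraction for the initial S/G segment. -/
lemma Achain (H : PH O c v n a) (f : ℕ) (hfn : f ≤ n)
    (hA : ∀ i, i < f → SE O v i ∨ GE O c v i) (i0 : ℕ)
    (hi0f : i0 < f) (hG0 : GE O c v i0) :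
    ∃ m, f ≤ aidx (GE O c v) i0 m + 2 ∧
      (∀ s, s ≤ m → aidx (GE O c v) i0 s < f ∧ GE O c v (aidx (GE O c v) i0 s)) ∧
      (∀ t, t < m →
        O.CenterAdj (v (aidx (GE O c v) i0 t + 1)) (v (aidx (GE O c v) i0 (t + 1) + 1))) := by
  classical
  set A := aidx (GE O c v) i0 with hA_def
  set P : ℕ → Prop := fun t => ∀ s, s ≤ t → A s < f ∧ GE O c v (A s) with hP_def
  have hP0 : P 0 := by
    intro s hs
    have : s = 0 := by omega
    subst this
    exact ⟨hi0f, hG0⟩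
  set m := Nat.findGreatest P n with hm_def
  have hPm : P m := Nat.findGreatest_spec (Nat.zero_le n) hP0
  have hmn : m < n := by
    have h1 := (hPm m le_rfl).1
    have h2 : i0 + m ≤ A m := aidx_lb (GE O c v) i0 m
    omega
  have hnP : ¬ P (m + 1) := Nat.findGreatest_is_greatest (Nat.lt_succ_self _) (by omega)
  have hkey : ¬ (A (m + 1) < f ∧ GE O c v (A (m + 1))) := by
    intro hcc
    apply hnP
    intro s hs
    rcases Nat.lt_or_ge s (m + 1) with h | h
    · exact hPm s (by omega)
    · have : s = m + 1 := by omega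
      subst this
      exact hcc
  refine ⟨m, ?_, hPm, ?_⟩
  · -- f ≤ A m + 2
    by_contra hcon
    push_neg at hcon
    have h1f : A m + 1 < f := by omega
    have h2f : A m + 2 < f := by omega
    rcases hA (A m + 1) h1f with hS | hG
    · rcases hA (A m + 2) h2f with hS2 | hG2
      · exact O.hS.1 _ _ _ hS hS2
      · have hnG1 : ¬ GE O c v (A m + 1) := fun hg => O.hdisj _ _ ⟨hS, hg.1⟩
        have he : A (m + 1) = A m + 2 := by
          rw [hA_def, aidx_succ, if_neg hnG1]
        exact hkey (by rw [he]; exact ⟨h2f, hG2⟩)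
    · have he : A (m + 1) = A m + 1 := by
        rw [hA_def, aidx_succ, if_pos hG]
      exact hkey (by rw [he]; exact ⟨h1f, hG⟩)
  · -- chain edges
    intro t ht
    have hGt := (hPm t (by omega)).2
    have hGt1 := (hPm (t + 1) (by omega)).2
    have hft := (hPm t (by omega)).1
    have hft1 := (hPm (t + 1) (by omega)).1
    have htn : A t < n := by omega
    by_cases hg : GE O c v (A t + 1)
    · have he : A (t + 1) = A t + 1 := by rw [hA_def, aidx_succ, if_pos hg]
      rw [he] at hft1 ⊢
      refine ⟨fun heq => ?_, (Gfacts H htn hGt).2.2,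
        (Gfacts H (by omega) hg).2.2, Or.inl hg.1⟩
      have := H.hinj (A t + 1) (A t + 1 + 1) (by omega) (by omega) heq
      omega
    · have he : A (t + 1) = A t + 2 := by rw [hA_def, aidx_succ, if_neg hg]
      rw [he] at hft1 hGt1 ⊢
      have hS1 : SE O v (A t + 1) := by
        rcases hA (A t + 1) (by omega) with h | h
        · exact h
        · exact absurd h hg
      refine ⟨fun heq => ?_, (Gfacts H htn hGt).2.2,
        (Gfacts H (by omega) hGt1).2.2, Or.inr ⟨v (A t + 2), hS1, hGt1.1⟩⟩
      have := H.hinj (A t + 1) (A t + 2 + 1) (by omega) (by omega) heq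
      omega

/-- Bound for the initial S/G segment. -/
lemma Apart (H : PH O c v n a) (f : ℕ) (hfn : f ≤ n)
    (hA : ∀ i, i < f → SE O v i ∨ GE O c v i) (d : ℕ)
    (hda : ∀ (N : ℕ) (w : ℕ → V), (∀ i j, i ≤ N → j ≤ N → w i = w j → i = j) →
      (∀ i < N, O.CenterAdj (w i) (w (i + 1))) → (∀ i ≤ N, c (w i) = a) → N ≤ d) :
    f ≤ 2 * d + 2 := by
  rcases Nat.lt_or_ge f 2 with hf2 | hf2
  · omega
  have h0n : 0 < n := by omega
  have h1n : 1 < n := by omega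
  rcases hA 0 (by omega) with hS0 | hG0
  · -- first edge is a star edge
    have hG1 : GE O c v 1 := by
      rcases hA 1 (by omega) with h | h
      · exact absurd h (O.hS.1 _ _ _ hS0)
      · exact h
    have hc0 : c (v 0) = a := by
      by_contra hne
      exact hG1.2.2.2 ⟨v 0, hS0, by rw [Scolor H h0n hS0]; exact hne⟩
    obtain ⟨m, hfb, hPm, hchain⟩ := Achain H f hfn hA 1 (by omega) hG1
    set A := aidx (GE O c v) 1 with hA_def
    have hub : A m ≤ 1 + 2 * m := aidx_ub (GE O c v) 1 m
    have hbound : m + 1 ≤ d := by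
      apply hda (m + 1) (fun t => if t = 0 then v 0 else v (A (t - 1) + 1))
      · intro i j hi hj he
        by_cases hi0 : i = 0 <;> by_cases hj0 : j = 0
        · omega
        · rw [if_pos hi0, if_neg hj0] at he
          have hjf := (hPm (j - 1) (by omega)).1
          have := H.hinj 0 (A (j - 1) + 1) (by omega) (by omega) he
          omega
        · rw [if_neg hi0, if_pos hj0] at he
          have hif := (hPm (i - 1) (by omega)).1
          have := H.hinj (A (i - 1) + 1) 0 (by omega) (by omega) he
          omega
        · rw [if_neg hi0, if_neg hj0] at he
          have hif := (hPm (i - 1) (by omega)).1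
          have hjf := (hPm (j - 1) (by omega)).1
          have h2 := H.hinj (A (i - 1) + 1) (A (j - 1) + 1) (by omega) (by omega) he
          have h3 : A (i - 1) = A (j - 1) := by omega
          have := (aidx_mono (GE O c v) 1).injective h3
          omega
      · intro i hi
        rcases Nat.eq_zero_or_pos i with rfl | hipos
        · have hA0 : A 0 = 1 := rfl
          show O.CenterAdj (if (0 : ℕ) = 0 then v 0 else v (A (0 - 1) + 1))
            (if (1 : ℕ) = 0 then v 0 else v (A (1 - 1) + 1))
          rw [if_pos rfl, if_neg one_ne_zero]
          have hGA0 : GE O c v (A 0) := (hPm 0 (by omega)).2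
          rw [hA0]
          refine ⟨fun heq => ?_, Scenter hS0, (Gfacts H h1n hG1).2.2,
            Or.inr ⟨v 1, hS0, hG1.1⟩⟩
          have h2f := (hPm 0 (by omega)).1
          have := H.hinj 0 (1 + 1) (by omega) (by omega) heq
          omega
        · obtain ⟨i', rfl⟩ : ∃ i', i = i' + 1 := ⟨i - 1, by omega⟩
          show O.CenterAdj (if i' + 1 = 0 then v 0 else v (A (i' + 1 - 1) + 1))
            (if i' + 1 + 1 = 0 then v 0 else v (A (i' + 1 + 1 - 1) + 1))
          rw [if_neg (Nat.succ_ne_zero i'), if_neg (Nat.succ_ne_zero (i' + 1))]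
          simp only [Nat.add_sub_cancel]
          exact hchain i' (by omega)
      · intro i hi
        by_cases hi0 : i = 0
        · subst hi0
          show c (if (0 : ℕ) = 0 then v 0 else v (A (0 - 1) + 1)) = a
          rw [if_pos rfl]
          exact hc0
        · show c (if i = 0 then v 0 else v (A (i - 1) + 1)) = a
          rw [if_neg hi0]
          have h1 := (hPm (i - 1) (by omega)).1
          exact (Gfacts H (by omega) (hPm (i - 1) (by omega)).2).2.1
    omega
  · -- first edge is a good edge
    obtain ⟨m, hfb, hPm, hchain⟩ := Achain H f hfn hA 0 (by omega) hG0
    set A := aidx (GE O c v) 0 with hA_def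
    have hub : A m ≤ 0 + 2 * m := aidx_ub (GE O c v) 0 m
    have hbound : m ≤ d := by
      apply hda m (fun t => v (A t + 1))
      · intro i j hi hj he
        have hif := (hPm i (by omega)).1
        have hjf := (hPm j (by omega)).1
        have h2 := H.hinj (A i + 1) (A j + 1) (by omega) (by omega) he
        have h3 : A i = A j := by omega
        exact (aidx_mono (GE O c v) 0).injective h3
      · intro i hi
        exact hchain i hi
      · intro i hi
        have h1 := (hPm i (by omega)).1
        exact (Gfacts H (by omega) (hPm i (by omega)).2).2.1
    omega

/-- Bound for the part of the path after the first bad edge. -/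
lemma Bpart (H : PH O c v n a) (dT : ℕ)
    (hdT : ∀ (N : ℕ) (w : ℕ → V), (∀ i j, i ≤ N → j ≤ N → w i = w j → i = j) →
      (∀ i < N, O.T (w i) (w (i + 1))) → (∀ i ≤ N, O.IsLeaf (w i)) →
      (∀ i ≤ N, c (w i) = c (w 0)) → N ≤ dT)
    (f : ℕ) (hfn : f < n) (hfB : BE O c v f) (d : ℕ)
    (hdb : ∀ (N : ℕ) (w : ℕ → V), (∀ i j, i ≤ N → j ≤ N → w i = w j → i = j) →
      (∀ i < N, O.CenterAdj (w i) (w (i + 1))) → (∀ i ≤ N, c (w i) = 3 - a) → N ≤ d) :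
    n ≤ f + 2 * d + dT + 4 := by
  classical
  by_cases hex : ∃ i, f ≤ i ∧ i < n ∧ SE O v i
  · -- there is a star edge after f
    obtain ⟨s0, ⟨hfs0, hs0n, hS0⟩, hmin⟩ :
        ∃ s0, (f ≤ s0 ∧ s0 < n ∧ SE O v s0) ∧
          ∀ i, i < s0 → ¬ (f ≤ i ∧ i < n ∧ SE O v i) :=
      ⟨Nat.find hex, Nat.find_spec hex, fun i hi => Nat.find_min hex hi⟩
    have hmid : ∀ k, f ≤ k → k < s0 → BE O c v k := by
      intro k hk
      induction k, hk using Nat.le_induction with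
      | base => intro _; exact hfB
      | succ k hk IH =>
        intro hk1
        have hks : k < s0 := by omega
        have hB := IH hks
        have hkn : k + 1 < n := by omega
        have hcb : c (v (k + 1)) = 3 - a := Bcolor H (by omega) hB
        rcases classify H hkn with h | h | h
        · exact absurd ⟨by omega, hkn, h⟩ (hmin (k + 1) hk1)
        · have := (Gfacts H hkn h).1
          rcases H.ha with h2 | h2 <;> omega
        · exact h
    have hfs0' : f < s0 := by
      rcases Nat.lt_or_ge f s0 with h | h
      · exact h
      · exfalso
        have hfe : f = s0 := by omega
        exact O.hdisj _ _ ⟨hfe ▸ hS0, hfB.1⟩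
    have hs0f2 : s0 ≤ f + 2 := by
      by_contra hcon
      push_neg at hcon
      obtain ⟨k, rfl⟩ : ∃ k, s0 = k + 3 := ⟨s0 - 3, by omega⟩
      have hBk : BE O c v k := hmid k (by omega) (by omega)
      have hBk1 : BE O c v (k + 1) := hmid (k + 1) (by omega) (by omega)
      have hBk2 : BE O c v (k + 2) := hmid (k + 2) (by omega) (by omega)
      have hc1 : c (v (k + 1)) = 3 - a := Bcolor H (by omega) hBk
      have hc2 : c (v (k + 2)) = 3 - a := Bcolor H (by omega) hBk1
      have hcen : O.IsCenter (v (k + 3)) := Scenter hS0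
      have hr := B_center_reb H (by omega) hBk2 hc2 hcen
      exact (H.htame _ _ hBk1.1 hr).1 (hc1.trans hc2.symm)
    -- the chain of star-edge tails
    set P' : ℕ → Prop := fun t => ∀ s, s ≤ t → s0 + 2 * s < n ∧ SE O v (s0 + 2 * s) with hP'_def
    have hP'0 : P' 0 := by
      intro s hs
      have : s = 0 := by omega
      subst this
      exact ⟨hs0n, hS0⟩
    set m := Nat.findGreatest P' n with hm_def
    have hPm : P' m := Nat.findGreatest_spec (Nat.zero_le n) hP'0
    have hmn : m < n := by
      have := (hPm m le_rfl).1
      omega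
    have hnP : ¬ P' (m + 1) := Nat.findGreatest_is_greatest (Nat.lt_succ_self _) (by omega)
    have hkey : ¬ (s0 + 2 * m + 2 < n ∧ SE O v (s0 + 2 * m + 2)) := by
      intro hcc
      apply hnP
      intro s hs
      rcases Nat.lt_or_ge s (m + 1) with h | h
      · exact hPm s (by omega)
      · have hse : s = m + 1 := by omega
        subst hse
        have he : s0 + 2 * (m + 1) = s0 + 2 * m + 2 := by ring
        rw [he]
        exact hcc
    have hcolchain : ∀ t, t ≤ m → c (v (s0 + 2 * t)) = 3 - a := by
      intro t
      induction t with
      | zero =>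
        intro _
        obtain ⟨k, rfl⟩ : ∃ k, s0 = k + 1 := ⟨s0 - 1, by omega⟩
        have hBk : BE O c v k := hmid k (by omega) (by omega)
        have h1 := Bcolor H (by omega) hBk
        show c (v (k + 1 + 2 * 0)) = 3 - a
        simpa using h1
      | succ t IH =>
        intro ht
        have h1 := IH (by omega)
        have hSt : SE O v (s0 + 2 * t) := (hPm t (by omega)).2
        have htn : s0 + 2 * t < n := (hPm t (by omega)).1
        have ht1n : s0 + 2 * t + 1 < n := by
          have := (hPm (t + 1) (by omega)).1
          omega
        have hca : c (v (s0 + 2 * t + 1)) = a := Scolor H htn hSt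
        have hrx : O.Rebellious c (v (s0 + 2 * t + 1)) :=
          ⟨v (s0 + 2 * t), hSt, by rw [h1, hca]; rcases H.ha with h2 | h2 <;> omega⟩
        have hTx : TEdge O v (s0 + 2 * t + 1) := leafTE H ht1n (Sleaf hSt)
        have hBx : BE O c v (s0 + 2 * t + 1) := T_reb hTx hrx
        have h2 := Bcolor H ht1n hBx
        have he : s0 + 2 * (t + 1) = s0 + 2 * t + 1 + 1 := by ring
        rw [he]
        exact h2
    have hedgechain : ∀ t, t < m → O.CenterAdj (v (s0 + 2 * t)) (v (s0 + 2 * (t + 1))) := by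
      intro t ht
      have hSt := (hPm t (by omega)).2
      have hSt1 := (hPm (t + 1) (by omega)).2
      have htn := (hPm t (by omega)).1
      have ht1n := (hPm (t + 1) (by omega)).1
      have he : s0 + 2 * (t + 1) = s0 + 2 * t + 2 := by ring
      rw [he] at hSt1 ht1n ⊢
      have hTx : TEdge O v (s0 + 2 * t + 1) := leafTE H (by omega) (Sleaf hSt)
      refine ⟨fun heq => ?_, Scenter hSt, Scenter hSt1,
        Or.inr ⟨v (s0 + 2 * t + 1), hSt, hTx⟩⟩
      have := H.hinj (s0 + 2 * t) (s0 + 2 * t + 2) (by omega) (by omega) heq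
      omega
    have hinjchain : ∀ (N : ℕ), N ≤ m + 1 → (s0 + 2 * N ≤ n) →
        ∀ i j, i ≤ N → j ≤ N → v (s0 + 2 * i) = v (s0 + 2 * j) → i = j := by
      intro N hN hNn i j hi hj heq
      have := H.hinj (s0 + 2 * i) (s0 + 2 * j) (by omega) (by omega) heq
      omega
    have hq : SE O v (s0 + 2 * m) := (hPm m le_rfl).2
    have hqn : s0 + 2 * m < n := (hPm m le_rfl).1
    have hcq : c (v (s0 + 2 * m)) = 3 - a := hcolchain m le_rfl
    have hmd : m ≤ d := by
      apply hdb m (fun t => v (s0 + 2 * t))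
      · intro i j hi hj heq
        exact hinjchain m (by omega) (by omega) i j hi hj heq
      · exact hedgechain
      · exact hcolchain
    rcases Nat.lt_or_ge (s0 + 2 * m + 2) n with hq2 | hq2
    · -- path continues past the last star edge and one bad edge
      have hnS2 : ¬ SE O v (s0 + 2 * m + 2) := fun hs => hkey ⟨hq2, hs⟩
      have hcax : c (v (s0 + 2 * m + 1)) = a := Scolor H hqn hq
      have hrx : O.Rebellious c (v (s0 + 2 * m + 1)) :=
        ⟨v (s0 + 2 * m), hq, by rw [hcq, hcax]; rcases H.ha with h2 | h2 <;> omega⟩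
      have hTx : TEdge O v (s0 + 2 * m + 1) := leafTE H (by omega) (Sleaf hq)
      have hBx : BE O c v (s0 + 2 * m + 1) := T_reb hTx hrx
      have hcy : c (v (s0 + 2 * m + 2)) = 3 - a := Bcolor H (by omega) hBx
      by_cases hyl : O.IsLeaf (v (s0 + 2 * m + 2))
      · have hnry : ¬ O.Rebellious c (v (s0 + 2 * m + 2)) := fun hr =>
          (H.htame _ _ hTx hr).2 hrx
        have := leafrun H dT hdT (s0 + 2 * m + 2) (by omega) hyl hcy hnry
        omega
      · have hceny : O.IsCenter (v (s0 + 2 * m + 2)) := hyl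
        have hm1d : m + 1 ≤ d := by
          apply hdb (m + 1) (fun t => v (s0 + 2 * t))
          · intro i j hi hj heq
            have := H.hinj (s0 + 2 * i) (s0 + 2 * j) (by omega) (by omega) heq
            omega
          · intro i hi
            rcases Nat.lt_or_ge i m with him | him
            · exact hedgechain i him
            · have hieq : i = m := by omega
              rw [hieq]
              have he : s0 + 2 * (m + 1) = s0 + 2 * m + 2 := by ring
              rw [he]
              exact ⟨fun heq => by
                  have := H.hinj (s0 + 2 * m) (s0 + 2 * m + 2) (by omega) (by omega) heq
                  omega,
                Scenter hq, hceny, Or.inr ⟨v (s0 + 2 * m + 1), hq, hTx⟩⟩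
          · intro i hi
            rcases Nat.lt_or_ge i (m + 1) with him | him
            · exact hcolchain i (by omega)
            · have hieq : i = m + 1 := by omega
              rw [hieq]
              have he : s0 + 2 * (m + 1) = s0 + 2 * m + 2 := by ring
              rw [he]
              exact hcy
        rcases Nat.lt_or_ge (s0 + 2 * m + 3) n with hq3 | hq3
        · have hTy : TEdge O v (s0 + 2 * m + 2) := by
            rcases (H.hedge (s0 + 2 * m + 2) (by omega) :
                O.S _ _ ∨ O.T _ _) with h | h
            · exact absurd h hnS2
            · exact h
          have hBy : BE O c v (s0 + 2 * m + 2) := T_else H (by omega) hTy hcy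
          have hcz : c (v (s0 + 2 * m + 3)) = 3 - a := Bcolor H (by omega) hBy
          have hlz : O.IsLeaf (v (s0 + 2 * m + 3)) := by
            by_contra hnl
            have hr := B_center_reb H (by omega) hBy hcy hnl
            exact hceny (reb_leaf hr)
          have hnrz : ¬ O.Rebellious c (v (s0 + 2 * m + 3)) := fun hr =>
            (H.htame _ _ hTy hr).1 (hcy.trans hcz.symm)
          have := leafrun H dT hdT (s0 + 2 * m + 3) (by omega) hlz hcz hnrz
          omega
        · omega
    · omega
  · -- no star edge after f : all edges are bad, terminal leaf run
    have hallB : ∀ k, f ≤ k → k < n → BE O c v k := by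
      intro k hk
      induction k, hk using Nat.le_induction with
      | base => intro _; exact hfB
      | succ k hk IH =>
        intro hk1
        have hkn : k < n := by omega
        have hB := IH hkn
        have hcb : c (v (k + 1)) = 3 - a := Bcolor H hkn hB
        rcases classify H hk1 with h | h | h
        · exact absurd ⟨by omega, hk1, h⟩ (fun hcc => hex ⟨k + 1, hcc⟩)
        · have := (Gfacts H hk1 h).1
          rcases H.ha with h2 | h2 <;> omega
        · exact h
    rcases Nat.lt_or_ge n (f + 3) with h3 | h3
    · omega
    · have hB0 := hallB f le_rfl (by omega)
      have hB1 := hallB (f + 1) (by omega) (by omega)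
      have hB2 := hallB (f + 2) (by omega) (by omega)
      have hc1 : c (v (f + 1)) = 3 - a := Bcolor H (by omega) hB0
      have hc2 : c (v (f + 2)) = 3 - a := Bcolor H (by omega) hB1
      have hc3 : c (v (f + 3)) = 3 - a := Bcolor H (by omega) hB2
      have hl3 : O.IsLeaf (v (f + 3)) := by
        by_contra hnl
        have hr := B_center_reb H (by omega) hB2 hc2 hnl
        exact (H.htame _ _ hB1.1 hr).1 (hc1.trans hc2.symm)
      have hnr3 : ¬ O.Rebellious c (v (f + 3)) := fun hr =>
        (H.htame _ _ hB2.1 hr).1 (hc2.trans hc3.symm)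
      have := leafrun H dT hdT (f + 3) (by omega) hl3 hc3 hnr3
      omega

end StmtAux

/-- If `c` is tame with `Res(c)` acyclic, `d_T` bounds the length of
vertex-monochromatic dipaths in `T` within `L(S)`, and `d_i` bounds the length of
dipaths in `Center(G)` whose vertices all have color `i`, then every monochromatic
dipath under `Ext(c)` has length at most `d_T + 2(d_1 + d_2) + 6`. -/
theorem stmt_10 (O : Outing V) (c : V → ℕ) (hc : ∀ x, c x = 1 ∨ c x = 2)
    (htame : O.Tame c)
    (hres : ∀ (n : ℕ) (v : ℕ → V), IsDicycle O.CenterAdj n v →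
      ¬ ∃ a, ∀ i < n, c (v i) = a)
    (dT d1 d2 : ℕ)
    (hdT : ∀ (n : ℕ) (v : ℕ → V), (∀ i j, i ≤ n → j ≤ n → v i = v j → i = j) →
      (∀ i < n, O.T (v i) (v (i + 1))) → (∀ i ≤ n, O.IsLeaf (v i)) →
      (∀ i ≤ n, c (v i) = c (v 0)) → n ≤ dT)
    (hd : ∀ a ∈ ({1, 2} : Set ℕ), ∀ (n : ℕ) (v : ℕ → V),
      (∀ i j, i ≤ n → j ≤ n → v i = v j → i = j) →
      (∀ i < n, O.CenterAdj (v i) (v (i + 1))) → (∀ i ≤ n, c (v i) = a) →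
      n ≤ if a = 1 then d1 else d2) :
    ∀ (n : ℕ) (v : ℕ → V), (∀ i j, i ≤ n → j ≤ n → v i = v j → i = j) →
      (∀ i < n, O.edge (v i) (v (i + 1))) →
      (∃ a, ∀ i < n, O.extColor c (v i) (v (i + 1)) = a) →
      n ≤ dT + 2 * (d1 + d2) + 6 := by
  classical
  intro n v hinj hedge hmono
  obtain ⟨a, hcol⟩ := hmono
  rcases Nat.eq_zero_or_pos n with rfl | hn
  · omega
  have ha : a = 1 ∨ a = 2 := by
    have h0 : O.extColor c (v 0) (v 1) = a := hcol 0 hn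
    unfold Outing.extColor at h0
    rcases hc (v 1) with h | h <;> split_ifs at h0 <;> omega
  have H : StmtAux.PH O c v n a := ⟨hc, htame, hinj, hedge, hcol, ha⟩
  set da := if a = 1 then d1 else d2 with hda_def
  set db := if (3 - a) = 1 then d1 else d2 with hdb_def
  have hsum : da + db = d1 + d2 := by
    rcases ha with h | h <;> subst h <;> norm_num at hda_def hdb_def <;> omega
  have hda : ∀ (N : ℕ) (w : ℕ → V), (∀ i j, i ≤ N → j ≤ N → w i = w j → i = j) →
      (∀ i < N, O.CenterAdj (w i) (w (i + 1))) → (∀ i ≤ N, c (w i) = a) → N ≤ da := by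
    intro N w h1 h2 h3
    have hmem : a ∈ ({1, 2} : Set ℕ) := by
      rcases ha with h | h <;> rw [h] <;> simp
    have := hd a hmem N w h1 h2 h3
    rwa [← hda_def] at this
  have hdb : ∀ (N : ℕ) (w : ℕ → V), (∀ i j, i ≤ N → j ≤ N → w i = w j → i = j) →
      (∀ i < N, O.CenterAdj (w i) (w (i + 1))) → (∀ i ≤ N, c (w i) = 3 - a) → N ≤ db := by
    intro N w h1 h2 h3
    have hmem : (3 - a) ∈ ({1, 2} : Set ℕ) := by
      rcases ha with h | h <;> rw [h] <;> norm_num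
    have := hd (3 - a) hmem N w h1 h2 h3
    rwa [← hdb_def] at this
  by_cases hBex : ∃ i, i < n ∧ StmtAux.BE O c v i
  · obtain ⟨ff, ⟨hfn, hfB⟩, hfmin⟩ :
        ∃ ff, (ff < n ∧ StmtAux.BE O c v ff) ∧
          ∀ i, i < ff → ¬ (i < n ∧ StmtAux.BE O c v i) :=
      ⟨Nat.find hBex, Nat.find_spec hBex, fun i hi => Nat.find_min hBex hi⟩
    have hA : ∀ i, i < ff → StmtAux.SE O v i ∨ StmtAux.GE O c v i := by
      intro i hi
      rcases StmtAux.classify H (show i < n by omega) with h | h | h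
      · exact Or.inl h
      · exact Or.inr h
      · exact (hfmin i hi ⟨by omega, h⟩).elim
    have h1 := StmtAux.Apart H ff (by omega) hA da hda
    have h2 := StmtAux.Bpart H dT hdT ff hfn hfB db hdb
    omega
  · have hA : ∀ i, i < n → StmtAux.SE O v i ∨ StmtAux.GE O c v i := by
      intro i hi
      rcases StmtAux.classify H hi with h | h | h
      · exact Or.inl h
      · exact Or.inr h
      · exact absurd ⟨hi, h⟩ (fun hcc => hBex ⟨i, hcc⟩)
    have h1 := StmtAux.Apart H n le_rfl hA da hda
    omega
end

section
/- For every outing G = (S,T) there exists a tame vertex 2-coloring c of G such that: (1) color class 1 of Res(c) is an independent set in Center(G); (2) color class 2 of Res(c) induces no directed path of length 2 in Center(G); and (3) there is no vertex-monochromatic directed path of length 2 in T whose vertices all lie in L(S). -/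
variable {V : Type*}

namespace Scratch

variable (O : Outing V)

lemma pred_unique {u u' v : V} (h : O.CenterAdj u v) (h' : O.CenterAdj u' v) : u = u' := by
  obtain ⟨-, hu, -, hc⟩ := h
  obtain ⟨-, hu', hv', hc'⟩ := h'
  rcases hc with hT | ⟨w, hS, hT⟩ <;> rcases hc' with hT' | ⟨w', hS', hT'⟩
  · exact O.hT.choose_spec.2.2.1 _ _ _ hT hT'
  · exact absurd ⟨u', (O.hT.choose_spec.2.2.1 _ _ _ hT' hT ▸ hS' : O.S u' u)⟩ hu
  · exact absurd ⟨u, (O.hT.choose_spec.2.2.1 _ _ _ hT hT' ▸ hS : O.S u u')⟩ hu'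
  · have : w = w' := O.hT.choose_spec.2.2.1 _ _ _ hT hT'
    exact O.hS.2 _ _ _ hS (this ▸ hS')

/-- `predN n u v` : `u` is the `n`-th ancestor of `v` in the center graph. -/
def predN : ℕ → V → V → Prop
  | 0, u, v => u = v
  | n+1, u, v => ∃ w, predN n u w ∧ O.CenterAdj w v

lemma predN_one {u v : V} : predN O 1 u v ↔ O.CenterAdj u v := by
  constructor
  · rintro ⟨w, rfl, h⟩; exact h
  · intro h; exact ⟨u, rfl, h⟩

lemma predN_unique : ∀ (n : ℕ) {a b v : V}, predN O n a v → predN O n b v → a = b := by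
  intro n
  induction n with
  | zero => rintro a b v rfl rfl; rfl
  | succ n ih =>
    rintro a b v ⟨w, hw, hwv⟩ ⟨w', hw', hwv'⟩
    have : w = w' := pred_unique O hwv hwv'
    exact ih hw (this ▸ hw')

lemma predN_comp (a : ℕ) : ∀ (b : ℕ) {u v : V},
    predN O (a + b) u v ↔ ∃ w, predN O a u w ∧ predN O b w v := by
  intro b
  induction b with
  | zero => intro u v; constructor
            · intro h; exact ⟨v, h, rfl⟩
            · rintro ⟨w, hw, rfl⟩; exact hw
  | succ b ih =>
    intro u v
    constructor
    · rintro ⟨z, hz, hzv⟩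
      obtain ⟨w, h1, h2⟩ := (ih).1 hz
      exact ⟨w, h1, z, h2, hzv⟩
    · rintro ⟨w, h1, z, h2, hzv⟩
      exact ⟨z, (ih).2 ⟨w, h1, h2⟩, hzv⟩

/-- The "same component" relation for the center graph. -/
def RelO (x y : V) : Prop := ∃ m n u, predN O m u x ∧ predN O n u y

lemma relO_refl (x : V) : RelO O x x := ⟨0, 0, x, rfl, rfl⟩

lemma relO_symm {x y : V} (h : RelO O x y) : RelO O y x := by
  obtain ⟨m, n, u, h1, h2⟩ := h; exact ⟨n, m, u, h2, h1⟩

lemma relO_ancestor {n n' : ℕ} {u u' v : V} (hle : n ≤ n')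
    (h : predN O n u v) (h' : predN O n' u' v) : predN O (n' - n) u' u := by
  have : predN O ((n' - n) + n) u' v := by rwa [Nat.sub_add_cancel hle]
  obtain ⟨w, h1, h2⟩ := (predN_comp O _ _).1 this
  rwa [predN_unique O n h2 h] at h1

lemma relO_trans {x y z : V} (h : RelO O x y) (h' : RelO O y z) : RelO O x z := by
  obtain ⟨m, n, u, h1, h2⟩ := h
  obtain ⟨m', n', u', h1', h2'⟩ := h'
  rcases le_total n m' with hle | hle
  · have hx : predN O (m' - n) u' u := relO_ancestor O hle h2 h1'
    have : predN O ((m' - n) + m) u' x := (predN_comp O _ _).2 ⟨u, hx, h1⟩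
    exact ⟨_, n', u', this, h2'⟩
  · have hx : predN O (n - m') u u' := relO_ancestor O hle h1' h2
    have : predN O ((n - m') + n') u z := (predN_comp O _ _).2 ⟨u', hx, h2'⟩
    exact ⟨m, _, u, h1, this⟩

lemma relO_of_adj {u v : V} (h : O.CenterAdj u v) : RelO O u v :=
  ⟨0, 1, u, rfl, (predN_one O).2 h⟩


lemma pattern_nat (M : ℕ) (hM2 : 2 ≤ M) :
    ∃ s' : ℕ → Bool,
      (∀ j, j < M → ¬(s' ((j+1) % M) = true ∧ s' j = true)) ∧
      (∀ j, j < M → s' (((j+1) % M + 1) % M) = true ∨ s' ((j+1) % M) = true ∨ s' j = true) := by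
  refine ⟨fun j => decide (if M % 3 = 1 then ((j % 3 = 0 ∧ j + 3 < M) ∨ j + 2 = M) else j % 3 = 0), ?_, ?_⟩
  · intro j hj
    rcases Nat.lt_or_ge (j+1) M with h1 | h1
    · rw [Nat.mod_eq_of_lt h1]
      by_cases h3 : M % 3 = 1
      · simp only [if_pos h3, decide_eq_true_eq, true_or, or_true, true_and, and_true] <;> first | trivial | omega
      · simp only [if_neg h3, decide_eq_true_eq, true_or, or_true, true_and, and_true] <;> first | trivial | omega
    · have hjm : j + 1 = M := by omega
      rw [hjm, Nat.mod_self]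
      by_cases h3 : M % 3 = 1
      · simp only [if_pos h3, decide_eq_true_eq, true_or, or_true, true_and, and_true] <;> first | trivial | omega
      · simp only [if_neg h3, decide_eq_true_eq, true_or, or_true, true_and, and_true] <;> first | trivial | omega
  · intro j hj
    rcases Nat.lt_or_ge (j+1) M with h1 | h1
    · rw [Nat.mod_eq_of_lt h1]
      rcases Nat.lt_or_ge (j+2) M with h2 | h2
      · rw [show j + 1 + 1 = j + 2 by omega, Nat.mod_eq_of_lt h2]
        by_cases h3 : M % 3 = 1
        · simp only [if_pos h3, decide_eq_true_eq, true_or, or_true, true_and, and_true] <;> first | trivial | omega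
        · simp only [if_neg h3, decide_eq_true_eq, true_or, or_true, true_and, and_true] <;> first | trivial | omega
      · rw [show j + 1 + 1 = M by omega, Nat.mod_self]
        by_cases h3 : M % 3 = 1
        · simp only [if_pos h3, decide_eq_true_eq, true_or, or_true, true_and, and_true] <;> first | trivial | omega
        · simp only [if_neg h3, decide_eq_true_eq, true_or, or_true, true_and, and_true] <;> first | trivial | omega
    · have hjm : j + 1 = M := by omega
      rw [hjm, Nat.mod_self, Nat.mod_eq_of_lt (by omega : 0 + 1 < M)]
      by_cases h3 : M % 3 = 1
      · simp only [if_pos h3, decide_eq_true_eq, true_or, or_true, true_and, and_true] <;> first | trivial | omega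
      · simp only [if_neg h3, decide_eq_true_eq, true_or, or_true, true_and, and_true] <;> first | trivial | omega

lemma pattern (M : ℕ) (hM : M ≠ 1) :
    ∃ s : ZMod M → Bool,
      (∀ k : ZMod M, ¬(s (k + 1) = true ∧ s k = true)) ∧
      (∀ k : ZMod M, s (k + 1 + 1) = true ∨ s (k + 1) = true ∨ s k = true) := by
  rcases Nat.eq_zero_or_pos M with h0 | h0
  · subst h0
    have : ∃ s : ℤ → Bool,
        (∀ k : ℤ, ¬(s (k + 1) = true ∧ s k = true)) ∧
        (∀ k : ℤ, s (k + 1 + 1) = true ∨ s (k + 1) = true ∨ s k = true) := by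
      refine ⟨fun k => decide (k % 3 = 0), ?_, ?_⟩
      · intro k; simp only [decide_eq_true_eq, true_or, or_true, true_and, and_true] <;> first | trivial | omega
      · intro k; simp only [decide_eq_true_eq, true_or, or_true, true_and, and_true] <;> first | trivial | omega
    exact this
  · have hM2 : 2 ≤ M := by omega
    haveI : NeZero M := ⟨by omega⟩
    haveI : Fact (1 < M) := ⟨by omega⟩
    obtain ⟨s', h1, h2⟩ := pattern_nat M hM2
    refine ⟨fun k => s' k.val, ?_, ?_⟩
    · intro k
      have hv1 : (k + 1).val = (k.val + 1) % M := by rw [ZMod.val_add, ZMod.val_one]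
      simp only [hv1]
      exact h1 k.val (ZMod.val_lt k)
    · intro k
      have hv1 : (k + 1).val = (k.val + 1) % M := by rw [ZMod.val_add, ZMod.val_one]
      have hv2 : (k + 1 + 1).val = ((k.val + 1) % M + 1) % M := by
        rw [ZMod.val_add, hv1, ZMod.val_one]
      simp only [hv1, hv2]
      exact h2 k.val (ZMod.val_lt k)
-- appended within namespace Scratch, after relO_of_adj

open Classical in
lemma exists_gamma_core (b : V) (M : ℕ) (hM : M ≠ 1)
    (KEY : ∀ (a a' : ℕ) (u : V), predN O a u b → predN O a' u b →
      (a : ZMod M) = (a' : ZMod M)) :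
    ∃ γ : V → ℕ, (∀ v, γ v = 1 ∨ γ v = 2) ∧ ∀ v, RelO O b v →
      (∀ u, O.CenterAdj u v → ¬(γ u = 1 ∧ γ v = 1)) ∧
      (∀ u w, O.CenterAdj u w → O.CenterAdj w v →
        ¬(γ u = 2 ∧ γ w = 2 ∧ γ v = 2)) := by
  obtain ⟨s, hs1, hs2⟩ := pattern M hM
  set F : V → ZMod M := fun v =>
    if h : ∃ p : ℕ × ℕ, ∃ u, predN O p.1 u b ∧ predN O p.2 u v
    then ((h.choose.1 : ZMod M) - (h.choose.2 : ZMod M)) else 0 with hF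
  have faux : ∀ {n n' m m' : ℕ} {u u' v : V}, n ≤ n' →
      predN O m u b → predN O n u v → predN O m' u' b → predN O n' u' v →
      (m : ZMod M) - (n : ZMod M) = (m' : ZMod M) - (n' : ZMod M) := by
    intro n n' m m' u u' v hle hm hn hm' hn'
    have hx : predN O (n' - n) u' u := relO_ancestor O hle hn hn'
    have hcomp : predN O ((n' - n) + m) u' b := (predN_comp O _ _).2 ⟨u, hx, hm⟩
    have := KEY _ _ _ hcomp hm'
    push_cast [Nat.cast_sub hle] at this ⊢
    linear_combination this
  have fspec : ∀ {m n : ℕ} {u v : V}, predN O m u b → predN O n u v →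
      F v = (m : ZMod M) - (n : ZMod M) := by
    intro m n u v hm hn
    have hex : ∃ p : ℕ × ℕ, ∃ w, predN O p.1 w b ∧ predN O p.2 w v := ⟨(m, n), u, hm, hn⟩
    rw [hF]
    simp only [dif_pos hex]
    obtain ⟨u', hm', hn'⟩ := hex.choose_spec
    rcases le_total hex.choose.2 n with hle | hle
    · exact faux hle hm' hn' hm hn
    · exact (faux hle hm hn hm' hn').symm
  have fstep : ∀ {u v : V}, RelO O b v → O.CenterAdj u v → F u = F v + 1 := by
    intro u v hbv huv
    obtain ⟨m, n, w, hwb, hwv⟩ := hbv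
    have hFv : F v = (m : ZMod M) - n := fspec hwb hwv
    rcases Nat.eq_zero_or_pos n with h0 | h0
    · subst h0
      have hwv' : w = v := hwv
      subst hwv'
      have h1m : predN O (1 + m) u b := (predN_comp O _ _).2 ⟨w, (predN_one O).2 huv, hwb⟩
      have hFu : F u = ((1 + m : ℕ) : ZMod M) - ((0 : ℕ) : ZMod M) :=
        fspec h1m (show predN O 0 u u from rfl)
      rw [hFu, hFv]
      push_cast
      ring
    · have : predN O ((n - 1) + 1) w v := by rwa [Nat.sub_add_cancel h0]
      obtain ⟨z, hz1, hz2⟩ := (predN_comp O _ _).1 this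
      have hz : u = z := pred_unique O huv ((predN_one O).1 hz2)
      subst hz
      have hFu : F u = (m : ZMod M) - ((n - 1 : ℕ) : ZMod M) := fspec hwb hz1
      rw [hFu, hFv]
      push_cast [Nat.cast_sub h0]
      ring
  refine ⟨fun v => if s (F v) = true then 1 else 2, fun v => by by_cases h : s (F v) = true <;> simp [h], ?_⟩
  intro v hbv
  constructor
  · intro u huv h1
    have hFu : F u = F v + 1 := fstep hbv huv
    have hsv : s (F v) = true := by
      by_contra h; simp only [if_neg h] at h1; omega
    have hsu : s (F u) = true := by
      by_contra h; simp only [if_neg h] at h1; omega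
    exact hs1 (F v) ⟨hFu ▸ hsu, hsv⟩
  · intro u w huw hwv h2
    have hFw : F w = F v + 1 := fstep hbv hwv
    have hbw : RelO O b w := relO_trans O hbv (relO_symm O (relO_of_adj O hwv))
    have hFu : F u = F v + 1 + 1 := by rw [fstep hbw huw, hFw]
    have key : ∀ x : ZMod M, (if s x = true then 1 else 2 : ℕ) = 2 → ¬ s x = true := by
      intro x hx h; rw [if_pos h] at hx; omega
    obtain ⟨g1, g2, g3⟩ := h2
    rcases hs2 (F v) with h | h | h
    · exact key (F u) g1 (by rwa [hFu])
    · exact key (F w) g2 (by rwa [hFw])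
    · exact key (F v) g3 h
lemma period_mul (b : V) (M : ℕ) (hMb : predN O M b b) :
    ∀ k : ℕ, predN O (M * k) b b := by
  intro k
  induction k with
  | zero => exact rfl
  | succ k ih =>
    have : predN O (M * k + M) b b := (predN_comp O _ _).2 ⟨b, ih, hMb⟩
    rwa [show M * (k + 1) = M * k + M by ring]

open Classical in
lemma exists_gamma (v0 : V) :
    ∃ γ : V → ℕ, (∀ v, γ v = 1 ∨ γ v = 2) ∧ ∀ v, RelO O v0 v →
      (∀ u, O.CenterAdj u v → ¬(γ u = 1 ∧ γ v = 1)) ∧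
      (∀ u w, O.CenterAdj u w → O.CenterAdj w v →
        ¬(γ u = 2 ∧ γ w = 2 ∧ γ v = 2)) := by
  by_cases hcyc : ∃ c, RelO O v0 c ∧ ∃ L, 0 < L ∧ predN O L c c
  · obtain ⟨b, hb, hLex⟩ := hcyc
    set M := Nat.find hLex with hMdef
    have hMspec : 0 < M ∧ predN O M b b := Nat.find_spec hLex
    have hM1 : M ≠ 1 := by
      intro h
      have := hMspec.2
      rw [h] at this
      exact ((predN_one O).1 this).1 rfl
    have period_dvd : ∀ p, predN O p b b → M ∣ p := by
      intro p
      induction p using Nat.strong_induction_on with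
      | _ p ih =>
        intro hp
        rcases Nat.eq_zero_or_pos p with h0 | h0
        · simp [h0]
        · have hMp : M ≤ p := Nat.find_min' hLex ⟨h0, hp⟩
          have hsub : predN O (p - M) b b := by
            have : predN O ((p - M) + M) b b := by rwa [Nat.sub_add_cancel hMp]
            obtain ⟨w, h1, h2⟩ := (predN_comp O _ _).1 this
            rwa [predN_unique O M h2 hMspec.2] at h1
          have hM0 := hMspec.1
          obtain ⟨k, hk⟩ := ih (p - M) (by omega) hsub
          exact ⟨k + 1, by rw [Nat.mul_add, Nat.mul_one]; omega⟩
    have KEY2 : ∀ (a a' : ℕ) (u : V), a ≤ a' → predN O a u b → predN O a' u b →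
        (a : ZMod M) = (a' : ZMod M) := by
      intro a a' u hle ha ha'
      have hd : predN O (a' - a) u u := relO_ancestor O hle ha ha'
      have hmul : predN O (M * a) b b := period_mul O b M hMspec.2 a
      have hMa : a ≤ M * a := Nat.le_mul_of_pos_left a hMspec.1
      have hbu : predN O (M * a - a) b u := by
        have : predN O ((M * a - a) + a) b b := by rwa [Nat.sub_add_cancel hMa]
        obtain ⟨w, h1, h2⟩ := (predN_comp O _ _).1 this
        rwa [predN_unique O a h2 ha] at h1
      have hub : predN O ((a' - a) + a) u b := (predN_comp O _ _).2 ⟨u, hd, ha⟩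
      have hbb : predN O ((M * a - a) + ((a' - a) + a)) b b :=
        (predN_comp O _ _).2 ⟨u, hbu, hub⟩
      have hdvd : M ∣ (M * a - a) + ((a' - a) + a) := period_dvd _ hbb
      have : M ∣ a' - a := by
        have h1 : (M * a - a) + ((a' - a) + a) = M * a + (a' - a) := by omega
        rw [h1] at hdvd
        exact (Nat.dvd_add_right (Dvd.intro a rfl)).1 hdvd
      have : ((a' - a : ℕ) : ZMod M) = 0 := (ZMod.natCast_eq_zero_iff _ _).2 this
      have h2 : ((a' : ZMod M)) - a = 0 := by
        rw [← Nat.cast_sub hle]; exact this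
      linear_combination -h2
    have KEY : ∀ (a a' : ℕ) (u : V), predN O a u b → predN O a' u b →
        (a : ZMod M) = (a' : ZMod M) := by
      intro a a' u ha ha'
      rcases le_total a a' with h | h
      · exact KEY2 a a' u h ha ha'
      · exact (KEY2 a' a u h ha' ha).symm
    obtain ⟨γ, hγv, hγ⟩ := exists_gamma_core O b M hM1 KEY
    exact ⟨γ, hγv, fun v hv => hγ v (relO_trans O (relO_symm O hb) hv)⟩
  · have KEY : ∀ (a a' : ℕ) (u : V), predN O a u v0 → predN O a' u v0 →
        (a : ZMod 0) = (a' : ZMod 0) := by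
      have KEY2 : ∀ (a a' : ℕ) (u : V), a ≤ a' → predN O a u v0 → predN O a' u v0 →
          a = a' := by
        intro a a' u hle ha ha'
        by_contra hne
        have hd : predN O (a' - a) u u := relO_ancestor O hle ha ha'
        exact hcyc ⟨u, ⟨a, 0, u, ha, rfl⟩, a' - a, by omega, hd⟩
      intro a a' u ha ha'
      rcases le_total a a' with h | h
      · rw [KEY2 a a' u h ha ha']
      · rw [KEY2 a' a u h ha' ha]
    obtain ⟨γ, hγv, hγ⟩ := exists_gamma_core O v0 0 (by omega) KEY
    exact ⟨γ, hγv, hγ⟩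
def relSetoid : Setoid V :=
  ⟨RelO O, ⟨relO_refl O, fun h => relO_symm O h, fun h h' => relO_trans O h h'⟩⟩

noncomputable def rep (v : V) : V := Quotient.out (Quotient.mk (relSetoid O) v)

lemma rep_rel (v : V) : RelO O (rep O v) v :=
  Quotient.exact (Quotient.out_eq (Quotient.mk (relSetoid O) v))

lemma rep_eq {u v : V} (h : RelO O u v) : rep O u = rep O v := by
  unfold rep
  rw [Quotient.sound (a := u) (b := v) h]

noncomputable def gsel (r : V) : V → ℕ := (exists_gamma O r).choose

noncomputable def gammaGlob (v : V) : ℕ := gsel O (rep O v) v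

lemma gammaGlob_val (v : V) : gammaGlob O v = 1 ∨ gammaGlob O v = 2 :=
  (exists_gamma O (rep O v)).choose_spec.1 v

lemma gamma_adj {u v : V} (h : O.CenterAdj u v) :
    ¬(gammaGlob O u = 1 ∧ gammaGlob O v = 1) := by
  have hre : rep O u = rep O v := rep_eq O (relO_of_adj O h)
  unfold gammaGlob
  rw [hre]
  exact ((exists_gamma O (rep O v)).choose_spec.2 v (rep_rel O v)).1 u h

lemma gamma_triple {u v w : V} (h1 : O.CenterAdj u v) (h2 : O.CenterAdj v w) :
    ¬(gammaGlob O u = 2 ∧ gammaGlob O v = 2 ∧ gammaGlob O w = 2) := by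
  have hre1 : rep O u = rep O w :=
    rep_eq O (relO_trans O (relO_of_adj O h1) (relO_of_adj O h2))
  have hre2 : rep O v = rep O w := rep_eq O (relO_of_adj O h2)
  unfold gammaGlob
  rw [hre1, hre2]
  exact ((exists_gamma O (rep O w)).choose_spec.2 w (rep_rel O w)).2 u v h1 h2

/-! tree machinery -/

noncomputable def rt : V := O.hT.choose

def tN : ℕ → V → V → Prop
  | 0, u, v => u = v
  | n+1, u, v => ∃ w, tN n u w ∧ O.T w v

lemma exists_tN (v : V) : ∃ n, tN O n (rt O) v := by
  have h := O.hT.choose_spec.1 v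
  induction h with
  | refl => exact ⟨0, rfl⟩
  | tail h1 h2 ih => obtain ⟨n, hn⟩ := ih; exact ⟨n+1, _, hn, h2⟩

open Classical in
noncomputable def dep (v : V) : ℕ := Nat.find (exists_tN O v)

lemma dep_root {v : V} (h : dep O v = 0) : rt O = v := by
  classical
  have hs : tN O (dep O v) (rt O) v := Nat.find_spec (exists_tN O v)
  rw [h] at hs
  exact hs

lemma dep_succ {u v : V} (h : O.T u v) : dep O v = dep O u + 1 := by
  classical
  have hle : dep O v ≤ dep O u + 1 :=
    Nat.find_min' (exists_tN O v) ⟨u, Nat.find_spec (exists_tN O u), h⟩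
  have hspec : tN O (dep O v) (rt O) v := Nat.find_spec (exists_tN O v)
  rcases Nat.eq_zero_or_pos (dep O v) with h0 | h0
  · have hrtv : rt O = v := dep_root O h0
    rw [← hrtv] at h
    exact absurd h (O.hT.choose_spec.2.1 u)
  · rw [show dep O v = (dep O v - 1) + 1 by omega] at hspec
    obtain ⟨w, hw, hwv⟩ := hspec
    have hwu : w = u := O.hT.choose_spec.2.2.1 _ _ _ hwv h
    subst hwu
    have : dep O w ≤ dep O v - 1 := Nat.find_min' (exists_tN O w) hw
    omega

/-! star centers of leaves -/

open Classical in
noncomputable def sv (v : V) : V := if h : O.IsLeaf v then h.choose else v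

lemma sv_spec {v : V} (h : O.IsLeaf v) : O.S (sv O v) v := by
  rw [sv, dif_pos h]
  exact h.choose_spec

lemma sv_eq {x v : V} (h : O.S x v) : x = sv O v :=
  O.hS.2 _ _ _ h (sv_spec O ⟨x, h⟩)

lemma sv_center {v : V} (h : O.IsLeaf v) : O.IsCenter (sv O v) :=
  fun ⟨z, hz⟩ => O.hS.1 z _ v hz (sv_spec O h)

/-! the coloring -/

open Classical in
noncomputable def g : ℕ → V → ℕ
  | 0, v => if O.IsCenter v then gammaGlob O v else gammaGlob O (sv O v)
  | n+1, v =>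
    if O.IsCenter v then gammaGlob O v
    else if (∃ x y, O.T x v ∧ O.T y x ∧ O.IsLeaf x ∧ O.IsLeaf y ∧
        g n x = gammaGlob O (sv O v) ∧ g n y = g n x)
      then 3 - gammaGlob O (sv O v) else gammaGlob O (sv O v)

noncomputable def cC (v : V) : ℕ := g O (dep O v) v

lemma g_coh : ∀ n m : ℕ, ∀ v : V, dep O v ≤ n → dep O v ≤ m → g O n v = g O m v := by
  intro n
  induction n with
  | zero =>
    intro m v h0 hm
    have hrt : rt O = v := dep_root O (by omega)
    by_cases hc : O.IsCenter v
    · cases m <;> simp only [g, if_pos hc]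
    · cases m with
      | zero => rfl
      | succ m =>
        simp only [g, if_neg hc]
        rw [if_neg]
        rintro ⟨x, y, hxv, -⟩
        rw [← hrt] at hxv
        exact O.hT.choose_spec.2.1 x hxv
  | succ n ih =>
    intro m v hn hm
    classical
    cases m with
    | zero =>
      have hrt : rt O = v := dep_root O (by omega)
      by_cases hc : O.IsCenter v
      · simp only [g, if_pos hc]
      · simp only [g, if_neg hc]
        rw [if_neg]
        rintro ⟨x, y, hxv, -⟩
        rw [← hrt] at hxv
        exact O.hT.choose_spec.2.1 x hxv
    | succ m =>
      by_cases hc : O.IsCenter v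
      · simp only [g, if_pos hc]
      · simp only [g, if_neg hc]
        have key : ∀ x : V, dep O x < dep O v → g O n x = g O m x := by
          intro x hx
          exact ih m x (by omega) (by omega)
        have hiff : (∃ x y, O.T x v ∧ O.T y x ∧ O.IsLeaf x ∧ O.IsLeaf y ∧
            g O n x = gammaGlob O (sv O v) ∧ g O n y = g O n x) ↔
            (∃ x y, O.T x v ∧ O.T y x ∧ O.IsLeaf x ∧ O.IsLeaf y ∧
            g O m x = gammaGlob O (sv O v) ∧ g O m y = g O m x) := by
          constructor
          · rintro ⟨x, y, hxv, hyx, hlx, hly, h1, h2⟩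
            have hdx : dep O x < dep O v := by rw [dep_succ O hxv]; omega
            have hdy : dep O y < dep O v := by rw [dep_succ O hxv, dep_succ O hyx]; omega
            exact ⟨x, y, hxv, hyx, hlx, hly, by rw [← key x hdx]; exact h1,
              by rw [← key x hdx, ← key y hdy]; exact h2⟩
          · rintro ⟨x, y, hxv, hyx, hlx, hly, h1, h2⟩
            have hdx : dep O x < dep O v := by rw [dep_succ O hxv]; omega
            have hdy : dep O y < dep O v := by rw [dep_succ O hxv, dep_succ O hyx]; omega
            exact ⟨x, y, hxv, hyx, hlx, hly, by rw [key x hdx]; exact h1,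
              by rw [key x hdx, key y hdy]; exact h2⟩
        exact if_congr hiff rfl rfl

lemma cC_center {v : V} (hc : O.IsCenter v) : cC O v = gammaGlob O v := by
  unfold cC
  cases hd : dep O v <;> simp only [g, if_pos hc]

def Flip (v : V) : Prop := ∃ x y, O.T x v ∧ O.T y x ∧ O.IsLeaf x ∧ O.IsLeaf y ∧
  cC O x = gammaGlob O (sv O v) ∧ cC O y = cC O x

open Classical in
lemma cC_leaf {v : V} (hl : O.IsLeaf v) :
    cC O v = if Flip O v then 3 - gammaGlob O (sv O v) else gammaGlob O (sv O v) := by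
  have hc : ¬ O.IsCenter v := fun h => h hl
  unfold cC
  rcases hd : dep O v with _ | n
  · have hrt : rt O = v := dep_root O hd
    have hnf : ¬ Flip O v := by
      rintro ⟨x, y, hxv, -⟩
      rw [← hrt] at hxv
      exact O.hT.choose_spec.2.1 x hxv
    rw [if_neg hnf]
    simp only [g, if_neg hc]
  · simp only [g, if_neg hc]
    have key : ∀ x : V, dep O x ≤ n → g O n x = cC O x := fun x hx =>
      g_coh O n (dep O x) x hx le_rfl
    have hiff : (∃ x y, O.T x v ∧ O.T y x ∧ O.IsLeaf x ∧ O.IsLeaf y ∧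
        g O n x = gammaGlob O (sv O v) ∧ g O n y = g O n x) ↔ Flip O v := by
      constructor
      · rintro ⟨x, y, hxv, hyx, hlx, hly, h1, h2⟩
        have hdx : dep O x ≤ n := by have := dep_succ O hxv; omega
        have hdy : dep O y ≤ n := by have := dep_succ O hxv; have := dep_succ O hyx; omega
        exact ⟨x, y, hxv, hyx, hlx, hly, by rw [← key x hdx]; exact h1,
          by rw [← key x hdx, ← key y hdy]; exact h2⟩
      · rintro ⟨x, y, hxv, hyx, hlx, hly, h1, h2⟩
        have hdx : dep O x ≤ n := by have := dep_succ O hxv; omega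
        have hdy : dep O y ≤ n := by have := dep_succ O hxv; have := dep_succ O hyx; omega
        exact ⟨x, y, hxv, hyx, hlx, hly, by rw [key x hdx]; exact h1,
          by rw [key x hdx, key y hdy]; exact h2⟩
    exact if_congr hiff rfl rfl

lemma cC_val (v : V) : cC O v = 1 ∨ cC O v = 2 := by
  by_cases hc : O.IsCenter v
  · rw [cC_center O hc]; exact gammaGlob_val O v
  · have hl : O.IsLeaf v := not_not.1 hc
    rw [cC_leaf O hl]
    split_ifs with hf
    · rcases gammaGlob_val O (sv O v) with h | h <;> omega
    · exact gammaGlob_val O (sv O v)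

lemma flip_of_reb {v : V} (h : O.Rebellious (cC O) v) : O.IsLeaf v ∧ Flip O v := by
  obtain ⟨x, hxv, hne⟩ := h
  have hl : O.IsLeaf v := ⟨x, hxv⟩
  have hx : x = sv O v := sv_eq O hxv
  have hcx : cC O x = gammaGlob O (sv O v) := by
    rw [hx, cC_center O (sv_center O hl)]
  refine ⟨hl, ?_⟩
  by_contra hnf
  have h2 : cC O v = gammaGlob O (sv O v) := by rw [cC_leaf O hl, if_neg hnf]
  exact hne (hcx.trans h2.symm)
lemma reb_of_flip {v : V} (hl : O.IsLeaf v) (hf : Flip O v) : O.Rebellious (cC O) v := by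
  refine ⟨sv O v, sv_spec O hl, ?_⟩
  rw [cC_center O (sv_center O hl), cC_leaf O hl, if_pos hf]
  rcases gammaGlob_val O (sv O v) with h | h <;> omega

lemma tame_cC : O.Tame (cC O) := by
  intro u v hT hreb
  obtain ⟨hlv, hf⟩ := flip_of_reb O hreb
  have hcv : cC O v = 3 - gammaGlob O (sv O v) := by rw [cC_leaf O hlv, if_pos hf]
  obtain ⟨x, y, hxv, hyx, hlx, hly, h1, h2⟩ := hf
  have hxu : x = u := O.hT.choose_spec.2.2.1 _ _ _ hxv hT
  subst hxu
  constructor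
  · rw [hcv, h1]
    rcases gammaGlob_val O (sv O v) with h | h <;> omega
  · intro hrebu
    obtain ⟨hlu, hfu⟩ := flip_of_reb O hrebu
    have hcu : cC O x = 3 - gammaGlob O (sv O x) := by rw [cC_leaf O hlu, if_pos hfu]
    obtain ⟨x', y', hx'u, hy'x', hlx', hly', h1', h2'⟩ := hfu
    have hx'y : x' = y := O.hT.choose_spec.2.2.1 _ _ _ hx'u hyx
    subst hx'y
    -- h1' : cC y = γ (sv x); h2 : cC y = cC x; hcu : cC x = 3 - γ (sv x)
    rcases gammaGlob_val O (sv O x) with h | h <;> omega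

lemma cond3_cC : ∀ u v w, O.T u v → O.T v w → O.IsLeaf u → O.IsLeaf v → O.IsLeaf w →
    ¬ (cC O u = cC O v ∧ cC O v = cC O w) := by
  rintro u v w hTuv hTvw hlu hlv hlw ⟨e1, e2⟩
  by_cases hf : Flip O w
  · have hcw : cC O w = 3 - gammaGlob O (sv O w) := by rw [cC_leaf O hlw, if_pos hf]
    obtain ⟨x, y, hxw, hyx, hlx, hly, h1, h2⟩ := hf
    have hxv : x = v := O.hT.choose_spec.2.2.1 _ _ _ hxw hTvw
    subst hxv
    -- h1 : cC v = γ (sv w), e2 : cC v = cC w, hcw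
    rcases gammaGlob_val O (sv O w) with h | h <;> omega
  · have hcw : cC O w = gammaGlob O (sv O w) := by rw [cC_leaf O hlw, if_neg hf]
    exact hf ⟨v, u, hTvw, hTuv, hlv, hlu, by rw [← hcw]; exact e2, e1⟩

lemma main_result :
    ∃ c : V → ℕ, (∀ x, c x = 1 ∨ c x = 2) ∧ O.Tame c ∧
      (∀ u v, O.CenterAdj u v → ¬ (c u = 1 ∧ c v = 1)) ∧
      (∀ u v w, O.CenterAdj u v → O.CenterAdj v w → u ≠ w →
        ¬ (c u = 2 ∧ c v = 2 ∧ c w = 2)) ∧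
      (∀ u v w, O.T u v → O.T v w → O.IsLeaf u → O.IsLeaf v → O.IsLeaf w →
        ¬ (c u = c v ∧ c v = c w)) := by
  refine ⟨cC O, cC_val O, tame_cC O, ?_, ?_, cond3_cC O⟩
  · rintro u v h ⟨h1, h2⟩
    rw [cC_center O h.2.1] at h1
    rw [cC_center O h.2.2.1] at h2
    exact gamma_adj O h ⟨h1, h2⟩
  · rintro u v w h1 h2 _ ⟨e1, e2, e3⟩
    rw [cC_center O h1.2.1] at e1
    rw [cC_center O h1.2.2.1] at e2
    rw [cC_center O h2.2.2.1] at e3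
    exact gamma_triple O h1 h2 ⟨e1, e2, e3⟩
end Scratch


/-- Every outing admits a tame vertex 2-coloring such that color class 1 of `Res(c)`
is independent in `Center(G)`, color class 2 of `Res(c)` induces no directed path of
length 2 in `Center(G)`, and there is no vertex-monochromatic directed path of
length 2 in `T` whose vertices all lie in `L(S)`. -/



theorem stmt_11 (O : Outing V) :
    ∃ c : V → ℕ, (∀ x, c x = 1 ∨ c x = 2) ∧ O.Tame c ∧
      (∀ u v, O.CenterAdj u v → ¬ (c u = 1 ∧ c v = 1)) ∧
      (∀ u v w, O.CenterAdj u v → O.CenterAdj v w → u ≠ w →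
        ¬ (c u = 2 ∧ c v = 2 ∧ c w = 2)) ∧
      (∀ u v w, O.T u v → O.T v w → O.IsLeaf u → O.IsLeaf v → O.IsLeaf w →
        ¬ (c u = c v ∧ c v = c w)) := by
  exact Scratch.main_result O
end

section
/- Let G be a connected directed graph in which every vertex has in-degree at most 1, whose unique cycle (if any) is odd. Then after deleting one edge uv of the cycle, the resulting graph is a forest that admits a proper 2-coloring with c(u)=2; in particular, every connected directed graph with all in-degrees at most 1 admits a vertex 2-coloring in which color class 1 is independent and color class 2 induces no directed path of length 2. -/
/-- A cycle of the underlying undirected multigraph of the digraph `R`. -/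
def IsUCycle {V : Type*} (R : V → V → Prop) (n : ℕ) (v : ℕ → V) : Prop :=
  1 ≤ n ∧ v n = v 0 ∧ (∀ i j, i < n → j < n → v i = v j → i = j) ∧
    (∀ i < n, R (v i) (v (i + 1)) ∨ R (v (i + 1)) (v i)) ∧
    (n = 2 → R (v 0) (v 1) ∧ R (v 1) (v 0))

section helpers
variable {V : Type*}

lemma ext_succ {n : ℕ} (hn : 1 ≤ n) {v : ℕ → V} (hcl : v n = v 0) (k : ℕ) :
    v ((k + 1) % n) = v (k % n + 1) := by
  have e1 : (k + 1) % n = (k % n + 1) % n :=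
    (Nat.ModEq.add_right 1 ((Nat.mod_modEq k n))).symm
  rcases Nat.lt_or_ge (k % n + 1) n with h | h
  · rw [e1, Nat.mod_eq_of_lt h]
  · have hk : k % n < n := Nat.mod_lt _ hn
    have h2 : k % n + 1 = n := by omega
    rw [e1, h2, Nat.mod_self]; exact hcl.symm

lemma ucycle_orient {R : V → V → Prop} (hindeg : ∀ u v w : V, R u v → R w v → u = w)
    {n : ℕ} {v : ℕ → V} (h : IsUCycle R n v) :
    (∀ j < n, R (v j) (v (j + 1))) ∨ (∀ j < n, R (v (j + 1)) (v j)) := by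
  obtain ⟨hn, hcl, hinj, hedge, h2⟩ := h
  rcases Nat.lt_or_ge n 3 with hsmall | h3
  · interval_cases n
    · -- n = 1
      have h0 := hedge 0 (by omega)
      rw [hcl] at h0
      have hr : R (v 0) (v 0) := by rcases h0 with h | h <;> exact h
      left
      intro j hj
      have : j = 0 := by omega
      subst this
      rw [show (0:ℕ) + 1 = 1 from rfl, hcl]
      exact hr
    · -- n = 2
      have hb := h2 rfl
      left
      intro j hj
      interval_cases j
      · exact hb.1
      · rw [show (1:ℕ) + 1 = 2 from rfl, hcl]
        exact hb.2
  · have hn : 1 ≤ n := by omega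
    have hsucc := ext_succ hn hcl
    have hwe : ∀ k, R (v (k % n)) (v (k % n + 1)) ∨ R (v (k % n + 1)) (v (k % n)) :=
      fun k => hedge (k % n) (Nat.mod_lt _ hn)
    have hne2 : ∀ k, v (k % n) ≠ v ((k + 2) % n) := by
      intro k he
      have h1 := hinj (k % n) ((k + 2) % n) (Nat.mod_lt _ hn) (Nat.mod_lt _ hn) he
      have h2' : n ∣ 2 := by
        have := (Nat.modEq_iff_dvd' (show k ≤ k + 2 by omega)).mp h1
        simpa using this
      have := Nat.le_of_dvd (by omega) h2'
      omega
    have hsink : ∀ k, R (v (k % n)) (v (k % n + 1)) → R (v ((k + 1) % n)) (v ((k + 1) % n + 1)) := by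
      intro k hk
      rcases hwe (k + 1) with h | h
      · exact h
      · exfalso
        rw [← hsucc k] at hk
        have heq := hindeg _ _ _ hk h
        rw [← hsucc (k + 1)] at heq
        exact hne2 k (by rw [heq])
    by_cases hex : ∃ j, j < n ∧ R (v j) (v (j + 1))
    · left
      obtain ⟨j, hj, hRj⟩ := hex
      have hbase : R (v (j % n)) (v (j % n + 1)) := by
        rw [Nat.mod_eq_of_lt hj]; exact hRj
      have hall : ∀ m, R (v ((j + m) % n)) (v ((j + m) % n + 1)) := by
        intro m; induction m with
        | zero => simpa using hbase
        | succ m ih =>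
          have := hsink (j + m) ih
          rwa [show j + m + 1 = j + (m + 1) by omega] at this
      intro k hk
      have h := hall (k + n - j)
      rw [show j + (k + n - j) = k + n by omega, Nat.add_mod_right, Nat.mod_eq_of_lt hk] at h
      exact h
    · right
      intro j hj
      rcases hedge j hj with h | h
      · exact absurd ⟨j, hj, h⟩ hex
      · exact h

lemma noBackChain {S : V → V → Prop} (hacc : ∀ x, Acc S x) {h : ℕ → V}
    (hch : ∀ k, S (h (k + 1)) (h k)) : False := by
  have key : ∀ x : V, Acc S x → ∀ g : ℕ → V, (∀ k, S (g (k + 1)) (g k)) → g 0 ≠ x := by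
    intro x hx
    induction hx with
    | intro x hpred ih =>
      intro g hg h0
      exact ih (g 1) (h0 ▸ hg 0) (fun k => g (k + 1)) (fun k => hg (k + 1)) rfl
  exact key (h 0) (hacc _) h hch rfl

lemma cycleBackChain {S : V → V → Prop} (hindeg : ∀ u v w : V, S u v → S w v → u = w)
    {m : ℕ} {w : ℕ → V} (h : IsUCycle S m w) : ∃ g : ℕ → V, ∀ k, S (g (k + 1)) (g k) := by
  obtain ⟨hm, hcl, hinj, hedge, h2⟩ := id h
  have hsucc := ext_succ hm hcl
  rcases ucycle_orient hindeg h with hf | hb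
  · refine ⟨fun k => w ((m * (k + 1) - k) % m), fun k => ?_⟩
    have he : ∀ t : ℕ, S (w (t % m)) (w (t % m + 1)) := fun t => hf (t % m) (Nat.mod_lt _ hm)
    have key : m * (k + 1 + 1) - (k + 1) + 1 = m * (k + 1) - k + m := by
      have h1 : k + 1 ≤ m * (k + 1) := Nat.le_mul_of_pos_left _ hm
      have h2' : m * (k + 1 + 1) = m * (k + 1) + m := by ring
      omega
    have hgoal := he (m * (k + 1 + 1) - (k + 1))
    have e2 : w ((m * (k + 1 + 1) - (k + 1)) % m + 1) = w ((m * (k + 1) - k) % m) := by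
      rw [← hsucc (m * (k + 1 + 1) - (k + 1)), key, Nat.add_mod_right]
    rw [e2] at hgoal
    exact hgoal
  · refine ⟨fun k => w (k % m), fun k => ?_⟩
    have h := hb (k % m) (Nat.mod_lt _ hm)
    rw [← hsucc k] at h
    exact h

lemma colorOfAcc {S : V → V → Prop} (hindeg : ∀ u v w : V, S u v → S w v → u = w)
    (hacc : ∀ x, Acc S x) :
    ∃ c : V → ℕ, (∀ x, c x = 1 ∨ c x = 2) ∧ ∀ a b, S a b → c a ≠ c b := by
  classical
  have wf : WellFounded S := ⟨hacc⟩
  set F : ∀ x : V, (∀ y, S y x → ℕ) → ℕ :=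
    fun x ih => if h : ∃ y, S y x then 3 - ih h.choose h.choose_spec else 1 with hF
  set c : V → ℕ := wf.fix F with hc
  have hunf : ∀ x, c x = F x (fun y _ => c y) := fun x => wf.fix_eq F x
  have hval : ∀ x, c x = 1 ∨ c x = 2 := by
    intro x
    induction hacc x with
    | intro x hpred ih =>
      rw [hunf x]
      by_cases hp : ∃ y, S y x
      · simp only [hF, dif_pos hp]
        rcases ih hp.choose hp.choose_spec with h1 | h1 <;> omega
      · simp [hF, dif_neg hp]
  have hstep : ∀ a b, S a b → c b = 3 - c a := by
    intro a b hab
    have hp : ∃ y, S y b := ⟨a, hab⟩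
    have he : hp.choose = a := hindeg _ _ _ hp.choose_spec hab
    rw [hunf b]
    simp only [hF, dif_pos hp, he]
  exact ⟨c, hval, fun a b hab => by
    have h1 := hstep a b hab
    rcases hval a with h | h <;> omega⟩

end helpers

section accdel
variable {V : Type*}

lemma accDel {R : V → V → Prop}
    (hconn : ∀ u v : V, Relation.ReflTransGen (fun a b => R a b ∨ R b a) u v)
    (hindeg : ∀ u v w : V, R u v → R w v → u = w)
    {n i : ℕ} {v : ℕ → V} (hn : 1 ≤ n) (hi : i < n) (hcl : v n = v 0)
    (hinj : ∀ a b, a < n → b < n → v a = v b → a = b)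
    (hfwd : ∀ j < n, R (v j) (v (j + 1))) :
    ∀ x, Acc (fun a b => R a b ∧
      ¬ ((a = v i ∧ b = v (i + 1)) ∨ (a = v (i + 1) ∧ b = v i))) x := by
  classical
  set R' : V → V → Prop := fun a b => R a b ∧
      ¬ ((a = v i ∧ b = v (i + 1)) ∨ (a = v (i + 1) ∧ b = v i)) with hR'
  have hstep1 : ∀ a c, R a c → Acc R' a → Acc R' c := by
    intro a c hac ha
    by_cases hrem : (a = v i ∧ c = v (i + 1)) ∨ (a = v (i + 1) ∧ c = v i)
    · refine Acc.intro c fun y hy => ?_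
      obtain rfl := hindeg y c a hy.1 hac
      exact absurd hrem hy.2
    · refine Acc.intro c fun y hy => ?_
      obtain rfl := hindeg y c a hy.1 hac
      exact ha
  have hwe : ∀ k, R (v (k % n)) (v (k % n + 1)) := fun k => hfwd (k % n) (Nat.mod_lt _ hn)
  have hb : Acc R' (v (i + 1)) := by
    refine Acc.intro _ fun y hy => absurd ?_ hy.2
    exact Or.inl ⟨hindeg y (v (i + 1)) (v i) hy.1 (hfwd i hi), rfl⟩
  have hcyc : ∀ k, Acc R' (v ((i + 1 + k) % n)) := by
    intro k
    induction k with
    | zero =>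
      have e : v ((i + 1 + 0) % n) = v (i + 1) := by
        rw [Nat.add_zero, ext_succ hn hcl i, Nat.mod_eq_of_lt hi]
      rw [e]; exact hb
    | succ k ih =>
      have e : i + 1 + (k + 1) = (i + 1 + k) + 1 := by omega
      rw [e, ext_succ hn hcl (i + 1 + k)]
      exact hstep1 _ _ (hwe (i + 1 + k)) ih
  have haccv : ∀ j, j < n → Acc R' (v j) := by
    intro j hj
    have h1 := hcyc (j + n - (i + 1))
    have e : (i + 1 + (j + n - (i + 1))) % n = j := by
      rw [show i + 1 + (j + n - (i + 1)) = j + n by omega, Nat.add_mod_right,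
        Nat.mod_eq_of_lt hj]
    rwa [e] at h1
  have haccVi : Acc R' (v i) := haccv i hi
  have hstep2 : ∀ a c, R a c → Acc R' c → Acc R' a := by
    intro a c hac hc
    by_cases hrem : (a = v i ∧ c = v (i + 1)) ∨ (a = v (i + 1) ∧ c = v i)
    · rcases hrem with ⟨h1, _⟩ | ⟨h1, _⟩
      · exact h1 ▸ haccVi
      · exact h1 ▸ hb
    · exact hc.inv ⟨hac, hrem⟩
  intro x
  have hpath := hconn (v i) x
  induction hpath with
  | refl => exact haccVi
  | tail hp hstep ih =>
    rcases hstep with h | h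
    · exact hstep1 _ _ h ih
    · exact hstep2 _ _ h ih

end accdel

/-- Let `G` be a connected digraph with all in-degrees at most 1. If its (unique)
cycle is odd, then deleting any edge of the cycle yields a forest admitting a proper
2-coloring giving color 2 to a prescribed endpoint of the deleted edge. In
particular, `G` admits a vertex 2-coloring in which color class 1 is independent
and color class 2 induces no directed path of length 2. -/
theorem stmt_13 {V : Type*} (R : V → V → Prop)
    (hconn : ∀ u v : V, Relation.ReflTransGen (fun a b => R a b ∨ R b a) u v)
    (hindeg : ∀ u v w : V, R u v → R w v → u = w) :
    (∀ (n : ℕ) (v : ℕ → V), IsUCycle R n v → Odd n → ∀ i < n,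
      (∀ (m : ℕ) (w : ℕ → V),
        ¬ IsUCycle (fun a b => R a b ∧
          ¬ ((a = v i ∧ b = v (i + 1)) ∨ (a = v (i + 1) ∧ b = v i))) m w) ∧
      ∃ c : V → ℕ, (∀ x, c x = 1 ∨ c x = 2) ∧
        (∀ a b, R a b → ¬ ((a = v i ∧ b = v (i + 1)) ∨ (a = v (i + 1) ∧ b = v i)) →
          a ≠ b → c a ≠ c b) ∧
        c (v i) = 2) ∧
    ∃ c : V → ℕ, (∀ x, c x = 1 ∨ c x = 2) ∧
      (∀ a b, (R a b ∨ R b a) → a ≠ b → ¬ (c a = 1 ∧ c b = 1)) ∧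
      (∀ a b d, R a b → R b d → a ≠ b → b ≠ d → a ≠ d →
        ¬ (c a = 2 ∧ c b = 2 ∧ c d = 2)) := by
  classical
  constructor
  · -- Part 1
    intro n v hcy hodd i hi
    obtain ⟨hn, hcl, hinj, hedge, h2⟩ := id hcy
    set R' : V → V → Prop := fun a b => R a b ∧
        ¬ ((a = v i ∧ b = v (i + 1)) ∨ (a = v (i + 1) ∧ b = v i)) with hR'def
    have hindeg' : ∀ u w z : V, R' u w → R' z w → u = z :=
      fun u w z h1 h2' => hindeg u w z h1.1 h2'.1
    have haccAll : ∀ x, Acc R' x := by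
      rcases ucycle_orient hindeg hcy with hf | hbk
      · exact accDel hconn hindeg hn hi hcl hinj hf
      · -- reversed cycle
        set v' : ℕ → V := fun j => v ((n - j) % n) with hv'def
        have hcl' : v' n = v' 0 := by
          simp [hv'def, Nat.sub_self, Nat.mod_self]
        have hinj' : ∀ a b, a < n → b < n → v' a = v' b → a = b := by
          intro a b ha hb' heq
          have key := hinj _ _ (Nat.mod_lt _ hn) (Nat.mod_lt _ hn) heq
          rcases Nat.eq_zero_or_pos a with rfl | hpa <;>
            rcases Nat.eq_zero_or_pos b with rfl | hpb
          · rfl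
          · rw [Nat.sub_zero, Nat.mod_self, Nat.mod_eq_of_lt (by omega)] at key; omega
          · rw [Nat.sub_zero, Nat.mod_self, Nat.mod_eq_of_lt (by omega)] at key; omega
          · rw [Nat.mod_eq_of_lt (by omega), Nat.mod_eq_of_lt (by omega)] at key; omega
        have hfwd' : ∀ j < n, R (v' j) (v' (j + 1)) := by
          intro j hj
          have ht : n - j - 1 < n := by omega
          have hR := hbk (n - j - 1) ht
          have e1 : v' (j + 1) = v (n - j - 1) := by
            simp only [hv'def]
            rw [show n - (j + 1) = n - j - 1 by omega, Nat.mod_eq_of_lt (by omega)]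
          have e2 : v' j = v (n - j - 1 + 1) := by
            simp only [hv'def]
            rcases Nat.eq_zero_or_pos j with rfl | hpos
            · rw [show n - 0 - 1 + 1 = n by omega, Nat.sub_zero, Nat.mod_self, hcl]
            · rw [Nat.mod_eq_of_lt (by omega), show n - j - 1 + 1 = n - j by omega]
          rw [e1, e2]; exact hR
        have hi' : n - 1 - i < n := by omega
        have hacc2 := accDel hconn hindeg hn hi' hcl' hinj' hfwd'
        have hv'1 : v' (n - 1 - i) = v (i + 1) := by
          simp only [hv'def]
          rcases Nat.lt_or_ge (i + 1) n with h | h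
          · rw [show n - (n - 1 - i) = i + 1 by omega, Nat.mod_eq_of_lt h]
          · rw [show n - (n - 1 - i) = n by omega, Nat.mod_self, ← hcl,
              show n = i + 1 by omega]
        have hv'2 : v' (n - 1 - i + 1) = v i := by
          simp only [hv'def]
          rw [show n - (n - 1 - i + 1) = i by omega, Nat.mod_eq_of_lt hi]
        have hRR : (fun a b => R a b ∧
            ¬ ((a = v' (n - 1 - i) ∧ b = v' (n - 1 - i + 1)) ∨
               (a = v' (n - 1 - i + 1) ∧ b = v' (n - 1 - i)))) = R' := by
          funext a b
          rw [hv'1, hv'2, hR'def]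
          apply propext
          constructor
          · rintro ⟨h1, h2'⟩
            exact ⟨h1, fun hx => h2' (hx.elim Or.inr Or.inl)⟩
          · rintro ⟨h1, h2'⟩
            exact ⟨h1, fun hx => h2' (hx.elim Or.inr Or.inl)⟩
        exact hRR ▸ hacc2
    refine ⟨?_, ?_⟩
    · intro m w hcy'
      obtain ⟨g, hch⟩ := cycleBackChain hindeg' hcy'
      exact noBackChain haccAll hch
    · obtain ⟨c, hval, hproper⟩ := colorOfAcc hindeg' haccAll
      by_cases h2c : c (v i) = 2
      · exact ⟨c, hval, fun a b hab hrem _ => hproper a b ⟨hab, hrem⟩, h2c⟩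
      · refine ⟨fun x => 3 - c x, fun x => ?_, fun a b hab hrem _ => ?_, ?_⟩
        · dsimp only; rcases hval x with h | h <;> omega
        · dsimp only
          have h1 := hproper a b ⟨hab, hrem⟩
          rcases hval a with h | h <;> rcases hval b with h' | h' <;> omega
        · dsimp only; rcases hval (v i) with h | h <;> omega
  · -- Part 2
    by_cases hall : ∀ x, Acc R x
    · obtain ⟨c, hval, hprop⟩ := colorOfAcc hindeg hall
      refine ⟨c, hval, ?_, ?_⟩
      · rintro a b (h | h) hne ⟨h1, h2⟩
        · exact hprop a b h (h1.trans h2.symm)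
        · exact hprop b a h (h2.trans h1.symm)
      · rintro a b d hab hbd _ _ _ ⟨h1, h2, _⟩
        exact hprop a b hab (h1.trans h2.symm)
    · push_neg at hall
      obtain ⟨x0, hx0⟩ := hall
      have hinv : ∀ a b, R a b → Acc R a → Acc R b := by
        intro a b hab ha
        refine Acc.intro b fun y hy => ?_
        obtain rfl := hindeg y b a hy hab
        exact ha
      have htrans : ∀ a b : V, Relation.ReflTransGen (fun a b => R a b ∨ R b a) a b →
          Acc R a → Acc R b := by
        intro a b hpath
        induction hpath with
        | refl => exact id
        | tail hp hstep ih =>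
          intro ha
          have hb' := ih ha
          rcases hstep with h | h
          · exact hinv _ _ h hb'
          · exact hb'.inv h
      have hnone : ∀ x, ¬ Acc R x := fun x hx => hx0 (htrans _ _ (hconn x x0) hx)
      have hpar : ∀ x, ∃ y, R y x := by
        intro x
        by_contra hno
        push_neg at hno
        exact hnone x (Acc.intro x fun y hy => absurd hy (hno y))
      choose p hp using hpar
      have hpu : ∀ a b, R a b → p b = a := fun a b h => hindeg _ _ _ (hp b) h
      have hmerge : ∀ a b : V, ∃ k l : ℕ, p^[k] a = p^[l] b := by
        intro a b
        have hpath := hconn a b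
        induction hpath with
        | refl => exact ⟨0, 0, rfl⟩
        | @tail b' c' hpp hstep ih =>
          obtain ⟨k, l, hkl⟩ := ih
          rcases hstep with h | h
          · refine ⟨k, l + 1, ?_⟩
            rw [Function.iterate_succ_apply, hpu _ _ h]
            exact hkl
          · refine ⟨k + 1, l, ?_⟩
            calc p^[k + 1] a = p (p^[k] a) := Function.iterate_succ_apply' p k a
              _ = p (p^[l] b') := by rw [hkl]
              _ = p^[l + 1] b' := (Function.iterate_succ_apply' p l b').symm
              _ = p^[l] (p b') := Function.iterate_succ_apply p l b'
              _ = p^[l] c' := by rw [hpu _ _ h]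
      by_cases hper : ∃ x : V, ∃ k : ℕ, 1 ≤ k ∧ p^[k] x = x
      · obtain ⟨x, hxk⟩ := hper
        set L := Nat.find hxk with hLdef
        obtain ⟨hL1, hLfix⟩ := Nat.find_spec hxk
        have hLmin : ∀ k, k < L → ¬ (1 ≤ k ∧ p^[k] x = x) := fun k hk => Nat.find_min hxk hk
        have hmul : ∀ q, p^[L * q] x = x := by
          intro q
          induction q with
          | zero => simp
          | succ q ih => rw [Nat.mul_succ, Function.iterate_add_apply, hLfix, ih]
        have hred : ∀ j, p^[j] x = p^[j % L] x := by
          intro j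
          conv_lhs => rw [← Nat.div_add_mod j L]
          rw [Nat.add_comm, Function.iterate_add_apply, hmul]
        have haux : ∀ r s, r < s → s < L → p^[r] x = p^[s] x → False := by
          intro r s hrs hs he
          have h1 : p^[L - s + s] x = x := by
            rw [show L - s + s = L by omega]; exact hLfix
          have h2' : p^[L - s + r] x = x := by
            rw [Function.iterate_add_apply, he, ← Function.iterate_add_apply]
            exact h1
          exact hLmin (L - s + r) (by omega) ⟨by omega, h2'⟩
        have hinj2 : ∀ r s, r < L → s < L → p^[r] x = p^[s] x → r = s := by
          intro r s hr hs he
          rcases lt_trichotomy r s with h | h | h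
          · exact (haux r s h hs he).elim
          · exact h
          · exact (haux s r h hr he.symm).elim
        have hdex : ∀ y : V, ∃ m : ℕ, ∃ j : ℕ, p^[j] x = p^[m] y := by
          intro y
          obtain ⟨k, l, hkl⟩ := hmerge y x
          exact ⟨k, l, hkl.symm⟩
        set d : V → ℕ := fun y => Nat.find (hdex y) with hddef
        have hdspec : ∀ y, ∃ j : ℕ, p^[j] x = p^[d y] y := fun y => Nat.find_spec (hdex y)
        set J : V → ℕ := fun z => if h : ∃ j : ℕ, p^[j] x = z then Nat.find h else 0 with hJdef
        have hJspec : ∀ z, (∃ j : ℕ, p^[j] x = z) → p^[J z] x = z := by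
          intro z hz
          simp only [hJdef, dif_pos hz]
          exact Nat.find_spec hz
        have hJmin : ∀ z (hz : ∃ j : ℕ, p^[j] x = z) (j : ℕ), p^[j] x = z → J z ≤ j := by
          intro z hz j hj
          simp only [hJdef, dif_pos hz]
          exact Nat.find_min' hz hj
        have hJlt : ∀ z, (∃ j : ℕ, p^[j] x = z) → J z < L := by
          intro z hz
          rcases Nat.lt_or_ge (J z) L with h | h
          · exact h
          · exfalso
            have h1 := hJspec z hz
            rw [hred] at h1
            have h2' := hJmin z hz _ h1
            have := Nat.mod_lt (J z) (show 0 < L by omega)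
            omega
        have hJr : ∀ r, r < L → J (p^[r] x) = r := by
          intro r hr
          have hz : ∃ j : ℕ, p^[j] x = p^[r] x := ⟨r, rfl⟩
          have h1 := hJspec _ hz
          have h2' := hJmin _ hz r rfl
          exact hinj2 _ _ (by omega) hr h1
        set φ : V → ℕ := fun y => d y + J (p^[d y] y) with hφdef
        have hE : ∀ a b, R a b → (φ a % 2 ≠ φ b % 2) ∨ (a = x ∧ b = p^[L - 1] x) := by
          intro a b hab
          have hpb : p b = a := hpu a b hab
          rcases Nat.eq_zero_or_pos (d b) with hdb0 | hdbpos
          · have hexb : ∃ j : ℕ, p^[j] x = b := by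
              have := hdspec b
              rwa [hdb0, Function.iterate_zero_apply] at this
            have hjb := hJspec b hexb
            have hjb_lt := hJlt b hexb
            have ha_eq : a = p^[J b + 1] x := by
              rw [Function.iterate_succ_apply', hjb, hpb]
            rcases Nat.lt_or_ge (J b + 1) L with hlt | hge
            · left
              have hexa : ∃ j : ℕ, p^[j] x = p^[0] a :=
                ⟨J b + 1, by rw [Function.iterate_zero_apply, ha_eq]⟩
              have hda0 : d a = 0 := by
                simp only [hddef]
                exact (Nat.find_eq_zero _).mpr hexa
              have e1 : φ a = J b + 1 := by
                simp only [hφdef]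
                rw [hda0, Function.iterate_zero_apply, ha_eq, hJr _ hlt]
                omega
              have e2 : φ b = J b := by
                simp only [hφdef]
                rw [hdb0, Function.iterate_zero_apply]
                omega
              omega
            · right
              have hjbL : J b = L - 1 := by omega
              constructor
              · rw [ha_eq, show J b + 1 = L by omega]
                exact hLfix
              · rw [← hjb, hjbL]
          · left
            obtain ⟨jb, hjb⟩ := hdspec b
            have hbase : p^[d b - 1] a = p^[d b] b := by
              conv_rhs => rw [show d b = (d b - 1) + 1 by omega]
              rw [Function.iterate_succ_apply, hpb]
            have hda : d a = d b - 1 := by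
              have hble : d a ≤ d b - 1 := by
                simp only [hddef]
                apply Nat.find_min' (hdex a)
                exact ⟨jb, by rw [hbase]; exact hjb⟩
              rcases Nat.lt_or_ge (d a) (d b - 1) with hlt | hge
              · exfalso
                obtain ⟨ja, hja⟩ := hdspec a
                have hw : p^[ja] x = p^[d a + 1] b := by
                  rw [Function.iterate_succ_apply, hpb]
                  exact hja
                exact Nat.find_min (hdex b) (show d a + 1 < d b from by omega) ⟨ja, hw⟩
              · omega
            have e1 : φ a = (d b - 1) + J (p^[d b] b) := by
              simp only [hφdef]
              rw [hda, hbase]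
            have e2 : φ b = d b + J (p^[d b] b) := by simp only [hφdef]
            omega
        have hφx : φ x = 0 := by
          have hdx : d x = 0 := by
            simp only [hddef]
            exact (Nat.find_eq_zero _).mpr ⟨0, rfl⟩
          simp only [hφdef]
          rw [hdx, Function.iterate_zero_apply]
          have hJx := hJr 0 (by omega)
          rw [Function.iterate_zero_apply] at hJx
          omega
        set c : V → ℕ := fun y => if φ y % 2 = 0 then 2 else 1 with hcdef
        have hc2 : ∀ y, c y = 2 ↔ φ y % 2 = 0 := by
          intro y
          by_cases h : φ y % 2 = 0 <;> simp [hcdef, h]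
        have hc1 : ∀ y, c y = 1 ↔ φ y % 2 = 1 := by
          intro y
          by_cases h : φ y % 2 = 0 <;> simp [hcdef, h] <;> omega
        refine ⟨c, ?_, ?_, ?_⟩
        · intro y
          by_cases h : φ y % 2 = 0 <;> simp [hcdef, h]
        · rintro a b (h | h) hne ⟨h1, h2⟩
          · rcases hE a b h with hpar | ⟨ha, hb'⟩
            · have := (hc1 a).mp h1
              have := (hc1 b).mp h2
              omega
            · rw [ha, (hc2 x).mpr (by omega)] at h1
              omega
          · rcases hE b a h with hpar | ⟨hb', ha⟩
            · have := (hc1 a).mp h1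
              have := (hc1 b).mp h2
              omega
            · rw [hb', (hc2 x).mpr (by omega)] at h2
              omega
        · rintro a b d hab hbd hne1 hne2' hne3 ⟨h1, h2, h3⟩
          have hp1 := (hc2 a).mp h1
          have hp2 := (hc2 b).mp h2
          rcases hE a b hab with hpar | ⟨ha, hb'⟩
          · omega
          · rcases hE b d hbd with hpar | ⟨hb2, hd⟩
            · have hp3 := (hc2 d).mp h3
              omega
            · -- b = p^[L-1] x and b = x
              rcases Nat.lt_or_ge L 2 with hL2 | hL2
              · -- L = 1
                have : b = x := hb2
                have : a = b := by rw [ha, hb', show L - 1 = 0 by omega,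
                  Function.iterate_zero_apply]
                exact hne1 this
              · exact hLmin (L - 1) (by omega) ⟨by omega, by rw [← hb', hb2]⟩
      · push_neg at hper
        have hinj0 : ∀ s t : ℕ, p^[s] x0 = p^[t] x0 → s = t := by
          intro s t he
          rcases lt_trichotomy s t with h | h | h
          · exfalso
            have : p^[t - s] (p^[s] x0) = p^[s] x0 := by
              rw [← Function.iterate_add_apply, show t - s + s = t by omega, ← he]
            exact hper (p^[s] x0) (t - s) (by omega) this
          · exact h
          · exfalso
            have : p^[s - t] (p^[t] x0) = p^[t] x0 := by
              rw [← Function.iterate_add_apply, show s - t + t = s by omega, he]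
            exact hper (p^[t] x0) (s - t) (by omega) this
        choose k l hkl using fun y => hmerge y x0
        have hW : ∀ (y : V) (k' l' : ℕ), p^[k'] y = p^[l'] x0 →
            (l y : ℤ) - k y = (l' : ℤ) - k' := by
          intro y k' l' h'
          have e1 : p^[k' + k y] y = p^[k' + l y] x0 := by
            rw [Function.iterate_add_apply, hkl y, ← Function.iterate_add_apply]
          have e2 : p^[k y + k'] y = p^[k y + l'] x0 := by
            rw [Function.iterate_add_apply, h', ← Function.iterate_add_apply]
          have e3 : p^[k' + l y] x0 = p^[k y + l'] x0 := by
            rw [← e1, Nat.add_comm k' (k y)]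
            exact e2
          have := hinj0 _ _ e3
          omega
        set φ2 : V → ℤ := fun y => (l y : ℤ) - k y with hφ2def
        have hE2 : ∀ a b, R a b → φ2 a = φ2 b + 1 := by
          intro a b hab
          have hpb : p b = a := hpu a b hab
          have hstep2 : p^[k a + 1] b = p^[l a] x0 := by
            rw [Function.iterate_add_apply, Function.iterate_one, hpb]
            exact hkl a
          have := hW b (k a + 1) (l a) hstep2
          simp only [hφ2def]
          push_cast at this ⊢
          omega
        refine ⟨fun y => if φ2 y % 2 = 0 then 1 else 2, ?_, ?_, ?_⟩
        · intro y
          by_cases h : φ2 y % 2 = 0 <;> simp [h]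
        · rintro a b (h | h) hne ⟨h1, h2⟩
          · have he := hE2 a b h
            by_cases hpa : φ2 a % 2 = 0 <;> by_cases hpb : φ2 b % 2 = 0 <;>
              simp [hpa, hpb] at h1 h2 <;> omega
          · have he := hE2 b a h
            by_cases hpa : φ2 a % 2 = 0 <;> by_cases hpb : φ2 b % 2 = 0 <;>
              simp [hpa, hpb] at h1 h2 <;> omega
        · rintro a b d hab hbd _ _ _ ⟨h1, h2, _⟩
          have he := hE2 a b hab
          by_cases hpa : φ2 a % 2 = 0 <;> by_cases hpb : φ2 b % 2 = 0 <;>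
            simp [hpa, hpb] at h1 h2 <;> omega
end

section
/- Let k, c, d be natural numbers and let H be a graph with |E(H)| ≥ k|V(H)| − c whose diameter is at least cd + 1. Then H cannot be decomposed into k forests each of whose components has diameter at most d. -/
open SimpleGraph

namespace StmtAux

variable {V : Type*}

/-- There is a walk between any two positions of a walk, of length the difference. -/
lemma exists_walk_getVert {G : SimpleGraph V} {u v : V} (p : G.Walk u v) :
    ∀ b, b ≤ p.length → ∀ a, a ≤ b →
      ∃ q : G.Walk (p.getVert a) (p.getVert b), q.length = b - a := by
  intro b
  induction b with
  | zero =>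
    intro _ a ha
    have : a = 0 := by omega
    subst this
    exact ⟨Walk.nil, by simp⟩
  | succ n ih =>
    intro hb a ha
    rcases Nat.lt_or_ge a (n + 1) with h | h
    · obtain ⟨q, hq⟩ := ih (by omega) a (by omega)
      exact ⟨q.concat (p.adj_getVert_succ (by omega)), by rw [Walk.length_concat]; omega⟩
    · have : a = n + 1 := by omega
      subst this
      exact ⟨Walk.nil, by simp⟩

/-- On a geodesic (shortest) walk, positions are at distance at least their index gap. -/
lemma segment_dist {G : SimpleGraph V} {u v : V} (p : G.Walk u v)
    (hp : p.length = G.dist u v) {a b : ℕ} (hab : a ≤ b) (hb : b ≤ p.length) :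
    b - a ≤ G.dist (p.getVert a) (p.getVert b) := by
  obtain ⟨q1, hq1⟩ := exists_walk_getVert p a (le_trans hab hb) 0 (Nat.zero_le _)
  obtain ⟨q3, hq3⟩ := exists_walk_getVert p p.length le_rfl b hb
  have hr : G.Reachable (p.getVert a) (p.getVert b) :=
    (exists_walk_getVert p b hb a hab).elim fun q _ => ⟨q⟩
  obtain ⟨q2, hq2⟩ := hr.exists_walk_length_eq_dist
  have hd := G.dist_le
    (((q1.copy p.getVert_zero rfl).append q2).append (q3.copy rfl p.getVert_length))
  simp only [Walk.length_append, Walk.length_copy] at hd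
  omega

/-- Distance is antitone in the graph, on reachable pairs. -/
lemma dist_anti' {G G' : SimpleGraph V} (h : G ≤ G') {u v : V} (hr : G.Reachable u v) :
    G'.dist u v ≤ G.dist u v := by
  obtain ⟨p, hp⟩ := hr.exists_walk_length_eq_dist
  calc G'.dist u v ≤ (p.mapLe h).length := dist_le _
    _ = p.length := by simp [Walk.mapLe, Walk.length_map]
    _ = _ := hp

/-- In a forest, the number of edges plus the number of components is at most the
number of vertices. -/
lemma forest_bound [Fintype V] {G : SimpleGraph V} (hG : G.IsAcyclic) :
    G.edgeSet.ncard + Nat.card G.ConnectedComponent ≤ Fintype.card V := by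
  classical
  have huniq : ∀ {a b : V} (p q : G.Walk a b), p.IsPath → q.IsPath → p = q := by
    intro a b p q hp hq
    exact Subtype.ext_iff.mp (hG.path_unique ⟨p, hp⟩ ⟨q, hq⟩)
  set r : V → V := fun v => (G.connectedComponentMk v).out with hrdef
  have hmk : ∀ v, G.connectedComponentMk (r v) = G.connectedComponentMk v := fun v =>
    Quot.out_eq _
  have hreach : ∀ v, G.Reachable v (r v) := fun v =>
    (ConnectedComponent.exact (hmk v)).symm
  have hPex : ∀ v, ∃ p : G.Walk v (r v), p.IsPath := fun v => by
    obtain ⟨w⟩ := hreach v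
    exact ⟨w.toPath, (w.toPath : G.Path _ _).isPath⟩
  choose P hPp using hPex
  set par : V → V := fun v => (P v).getVert 1 with hpardef
  have hroot : ∀ v, v = r v → par v = v := by
    intro v hv
    have h0 : ((Walk.nil : G.Walk v v).copy rfl hv).IsPath := by simp
    have h1 := huniq (P v) ((Walk.nil : G.Walk v v).copy rfl hv) (hPp v) h0
    show (P v).getVert 1 = v
    rw [h1, Walk.getVert_copy]
    rfl
  have hdich : ∀ {a b : V}, G.Adj a b → par a = b ∨ par b = a := by
    intro a b hab
    have hcab : r a = r b := by
      show (G.connectedComponentMk a).out = (G.connectedComponentMk b).out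
      rw [ConnectedComponent.sound hab.reachable]
    by_cases hb : b ∈ (P a).support
    · left
      have h1 : (P a).takeUntil b hb = Walk.cons hab Walk.nil :=
        huniq _ _ ((hPp a).takeUntil hb) (by simp [Walk.cons_isPath_iff, hab.ne])
      show (P a).getVert 1 = b
      conv_lhs => rw [← (P a).take_spec hb, h1]
      simp [Walk.cons_append]
    · right
      have hq : ((Walk.cons hab.symm (P a)).copy rfl hcab).IsPath := by
        rw [Walk.isPath_copy]
        exact (hPp a).cons hb
      have h2 := huniq (P b) _ (hPp b) hq
      show (P b).getVert 1 = a
      rw [h2]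
      simp
  have key : ∀ e : Sym2 V, ∃ x, e ∈ G.edgeSet → x ∈ e ∧ par x ∈ e ∧ par x ≠ x := by
    intro e
    induction e using Sym2.ind with
    | _ a b =>
      by_cases he : s(a, b) ∈ G.edgeSet
      · have hab : G.Adj a b := he
        rcases hdich hab with h | h
        · exact ⟨a, fun _ => ⟨Sym2.mem_mk_left a b, by rw [h]; exact Sym2.mem_mk_right a b,
            by rw [h]; exact hab.ne'⟩⟩
        · exact ⟨b, fun _ => ⟨Sym2.mem_mk_right a b, by rw [h]; exact Sym2.mem_mk_left a b,
            by rw [h]; exact hab.ne⟩⟩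
      · exact ⟨a, fun h => absurd h he⟩
  choose f hf using key
  have hinj : Set.InjOn f G.edgeSet := by
    intro e1 h1 e2 h2 hei
    obtain ⟨hx1, hy1, hne1⟩ := hf e1 h1
    obtain ⟨hx2, hy2, hne2⟩ := hf e2 h2
    have e1eq : e1 = s(f e1, par (f e1)) :=
      (Sym2.mem_and_mem_iff (Ne.symm hne1)).mp ⟨hx1, hy1⟩
    have e2eq : e2 = s(f e2, par (f e2)) :=
      (Sym2.mem_and_mem_iff (Ne.symm hne2)).mp ⟨hx2, hy2⟩
    rw [e1eq, e2eq, hei]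
  have havoid : ∀ e ∈ G.edgeSet, ∀ C : G.ConnectedComponent, f e ≠ C.out := by
    intro e he C hC
    obtain ⟨_, _, hne⟩ := hf e he
    apply hne
    apply hroot
    show f e = (G.connectedComponentMk (f e)).out
    have hmkC : G.connectedComponentMk (f e) = C := by
      rw [hC]; exact Quot.out_eq C
    rw [hmkC]; exact hC
  have hfinE : G.edgeSet.Finite := Set.toFinite _
  haveI : Fintype G.ConnectedComponent := Fintype.ofFinite _
  set Rt : Finset V := Finset.univ.image (fun C : G.ConnectedComponent => C.out) with hRt
  have houtinj : Function.Injective (fun C : G.ConnectedComponent => C.out) := by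
    intro C1 C2 h
    rw [← Quot.out_eq C1, ← Quot.out_eq C2]
    exact congrArg _ h
  have hRtcard : Rt.card = Nat.card G.ConnectedComponent := by
    rw [hRt, Finset.card_image_of_injective _ houtinj, Finset.card_univ,
      Nat.card_eq_fintype_card]
  have hcard : (hfinE.toFinset.image f).card = hfinE.toFinset.card :=
    Finset.card_image_of_injOn (by rwa [Set.Finite.coe_toFinset])
  have hsubset : hfinE.toFinset.image f ⊆ Rtᶜ := by
    intro x hx
    obtain ⟨e, he, rfl⟩ := Finset.mem_image.mp hx
    rw [Set.Finite.mem_toFinset] at he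
    rw [Finset.mem_compl, hRt]
    simp only [Finset.mem_image, Finset.mem_univ, true_and, not_exists]
    intro C hC
    exact havoid e he C hC.symm
  have h1 : hfinE.toFinset.card ≤ Fintype.card V - Rt.card := by
    rw [← hcard]
    calc (hfinE.toFinset.image f).card ≤ Rtᶜ.card := Finset.card_le_card hsubset
      _ = Fintype.card V - Rt.card := Finset.card_compl Rt
  have h2 : Rt.card ≤ Fintype.card V := Finset.card_le_univ Rt
  have h3 : G.edgeSet.ncard = hfinE.toFinset.card := Set.ncard_eq_toFinset_card _ hfinE
  omega

end StmtAux

/-- The edge set `F` spans a forest each of whose components has diameter at most `d`. -/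
def BddDiamForest {V : Type*} (d : ℕ) (F : Set (Sym2 V)) : Prop :=
  (SimpleGraph.fromEdgeSet F).IsAcyclic ∧
    ∀ u v : V, (SimpleGraph.fromEdgeSet F).Reachable u v →
      (SimpleGraph.fromEdgeSet F).dist u v ≤ d

/-- `G` decomposes into `k` forests each of whose components has diameter at most `d`. -/
def DiamArbLE {V : Type*} (d k : ℕ) (G : SimpleGraph V) : Prop :=
  ∃ F : Fin k → Set (Sym2 V), (∀ i, BddDiamForest d (F i)) ∧
    (∀ i j, i ≠ j → Disjoint (F i) (F j)) ∧ (⋃ i, F i) = G.edgeSet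

/-- If `|E(H)| ≥ k|V(H)| - c` and `H` has diameter at least `cd + 1`, then `H`
cannot be decomposed into `k` forests whose components have diameter at most `d`. -/
theorem stmt_16 {V : Type*} [Fintype V] (k c d : ℕ) (H : SimpleGraph V)
    (hE : (k * Fintype.card V : ℤ) - c ≤ (H.edgeSet.ncard : ℤ))
    (hdiam : ∃ u v : V, H.Reachable u v ∧ c * d + 1 ≤ H.dist u v) :
    ¬ DiamArbLE d k H := by
  classical
  rintro ⟨F, hF, hdisj, hcover⟩
  obtain ⟨u, v, hruv, hdist⟩ := hdiam
  set n := Fintype.card V with hn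
  set Gr : Fin k → SimpleGraph V := fun i => SimpleGraph.fromEdgeSet (F i) with hGr
  have hsub : ∀ i, F i ⊆ H.edgeSet := fun i => hcover ▸ Set.subset_iUnion F i
  have hedge : ∀ i, (Gr i).edgeSet = F i := by
    intro i
    rw [hGr]
    rw [SimpleGraph.edgeSet_fromEdgeSet]
    ext e
    simp only [Set.mem_diff, Set.mem_setOf_eq]
    exact ⟨fun h => h.1, fun h => ⟨h, H.not_isDiag_of_mem_edgeSet (hsub i h)⟩⟩
  have hle : ∀ i, Gr i ≤ H := fun i => by
    rw [hGr]
    conv_rhs => rw [← SimpleGraph.fromEdgeSet_edgeSet H]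
    exact SimpleGraph.fromEdgeSet_mono (hsub i)
  -- total number of components is at most c
  have hEcount : k * n ≤ H.edgeSet.ncard + c := by
    have h' : (k * n : ℤ) ≤ (H.edgeSet.ncard : ℤ) + c := by linarith
    exact_mod_cast h'
  have hfinF : ∀ i, (F i).Finite := fun i => Set.toFinite _
  have hsum : ∑ i : Fin k, (F i).ncard = H.edgeSet.ncard := by
    rw [← hcover]
    have hU : (⋃ i, F i) = ↑(Finset.univ.biUnion fun i => (hfinF i).toFinset) := by
      ext e
      simp only [Set.mem_iUnion, Finset.coe_biUnion, Finset.coe_univ, Set.mem_univ,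
        Set.Finite.coe_toFinset, Set.iUnion_true]
    rw [hU, Set.ncard_coe_finset,
      Finset.card_biUnion fun i _ j _ hij =>
        (Set.Finite.disjoint_toFinset (hs := hfinF i) (ht := hfinF j)).mpr (hdisj i j hij)]
    exact Finset.sum_congr rfl fun i _ => Set.ncard_eq_toFinset_card _ (hfinF i)
  have hcb : ∑ i : Fin k, Nat.card ((Gr i).ConnectedComponent) ≤ c := by
    have h1 : ∀ i : Fin k, (F i).ncard + Nat.card ((Gr i).ConnectedComponent) ≤ n := by
      intro i
      have := StmtAux.forest_bound (hF i).1
      rw [hedge i] at this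
      exact this
    have h2 : ∑ i : Fin k, ((F i).ncard + Nat.card ((Gr i).ConnectedComponent)) ≤
        ∑ _i : Fin k, n := Finset.sum_le_sum fun i _ => h1 i
    rw [Finset.sum_add_distrib, hsum] at h2
    rw [Finset.sum_const, Finset.card_univ, Fintype.card_fin, smul_eq_mul] at h2
    omega
  -- geodesic walk
  set L := H.dist u v with hL
  have hLpos : 0 < L := lt_of_lt_of_le (Nat.succ_pos _) hdist
  obtain ⟨p, hp⟩ := hruv.exists_walk_length_eq_dist
  rw [← hL] at hp
  have hedgein : ∀ t, t < L → s(p.getVert t, p.getVert (t + 1)) ∈ ⋃ i, F i := by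
    intro t ht
    rw [hcover]
    exact (H.mem_edgeSet).mpr (p.adj_getVert_succ (by omega))
  obtain ⟨i0, _⟩ := Set.mem_iUnion.mp (hedgein 0 hLpos)
  have hchoice : ∀ t, ∃ i : Fin k, t < L → s(p.getVert t, p.getVert (t + 1)) ∈ F i := by
    intro t
    by_cases ht : t < L
    · obtain ⟨i, hi⟩ := Set.mem_iUnion.mp (hedgein t ht)
      exact ⟨i, fun _ => hi⟩
    · exact ⟨i0, fun h => absurd h ht⟩
  choose I hI using hchoice
  set g : ℕ → Fin k × V :=
    fun t => (I t, ((Gr (I t)).connectedComponentMk (p.getVert t)).out) with hg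
  have hkey : ∀ s t, s < L → t < L → s ≤ t → g s = g t → t + 1 ≤ s + d := by
    intro s t hs ht hst hgs
    have h1 : I s = I t := congrArg Prod.fst hgs
    have h2 : ((Gr (I s)).connectedComponentMk (p.getVert s)).out =
        ((Gr (I t)).connectedComponentMk (p.getVert t)).out := congrArg Prod.snd hgs
    rw [h1] at h2
    have ha : (Gr (I t)).Reachable (p.getVert s)
        (((Gr (I t)).connectedComponentMk (p.getVert s)).out) :=
      (ConnectedComponent.exact (Quot.out_eq _)).symm
    have hb : (Gr (I t)).Reachable
        (((Gr (I t)).connectedComponentMk (p.getVert t)).out) (p.getVert t) :=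
      ConnectedComponent.exact (Quot.out_eq _)
    rw [← h2] at hb
    have hc : (Gr (I t)).Adj (p.getVert t) (p.getVert (t + 1)) := by
      rw [hGr, SimpleGraph.fromEdgeSet_adj]
      exact ⟨hI t ht, (p.adj_getVert_succ (by omega)).ne⟩
    have hr1 : (Gr (I t)).Reachable (p.getVert s) (p.getVert (t + 1)) :=
      (ha.trans hb).trans hc.reachable
    have hd1 : (Gr (I t)).dist (p.getVert s) (p.getVert (t + 1)) ≤ d :=
      (hF (I t)).2 _ _ hr1
    have hd2 : H.dist (p.getVert s) (p.getVert (t + 1)) ≤ d :=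
      le_trans (StmtAux.dist_anti' (hle (I t)) hr1) hd1
    have hd3 : (t + 1) - s ≤ H.dist (p.getVert s) (p.getVert (t + 1)) :=
      StmtAux.segment_dist p (hL ▸ hp) (by omega) (by omega)
    omega
  -- fiber counting
  have hfibers : ∀ b ∈ (Finset.range L).image g,
      ((Finset.range L).filter fun x => g x = b).card ≤ d := by
    intro b hb
    obtain ⟨t0, ht0, hgt0⟩ := Finset.mem_image.mp hb
    set fib := (Finset.range L).filter (fun x => g x = b) with hfib
    have hne : fib.Nonempty := ⟨t0, Finset.mem_filter.mpr ⟨ht0, hgt0⟩⟩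
    set s0 := fib.min' hne with hs0
    have hs0p := Finset.mem_filter.mp (fib.min'_mem hne)
    have hd1 : 1 ≤ d := by
      have := hkey s0 s0 (Finset.mem_range.mp hs0p.1) (Finset.mem_range.mp hs0p.1)
        le_rfl rfl
      omega
    have hsub2 : fib ⊆ Finset.Icc s0 (s0 + d - 1) := by
      intro x hx
      have hxp := Finset.mem_filter.mp hx
      have hx1 : s0 ≤ x := fib.min'_le x hx
      have hx2 : x + 1 ≤ s0 + d := hkey s0 x (Finset.mem_range.mp hs0p.1)
        (Finset.mem_range.mp hxp.1) hx1 (hs0p.2.trans hxp.2.symm)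
      exact Finset.mem_Icc.mpr ⟨hx1, by omega⟩
    calc fib.card ≤ (Finset.Icc s0 (s0 + d - 1)).card := Finset.card_le_card hsub2
      _ = s0 + d - 1 + 1 - s0 := Nat.card_Icc _ _
      _ ≤ d := by omega
  have hmain : L ≤ d * ((Finset.range L).image g).card := by
    have := Finset.card_le_mul_card_image (Finset.range L) d hfibers
    rwa [Finset.card_range] at this
  -- bounding the image by the total number of components
  haveI hCfin : ∀ i : Fin k, Fintype ((Gr i).ConnectedComponent) := fun i =>
    Fintype.ofFinite _
  have himg : ((Finset.range L).image g).card ≤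
      ∑ i : Fin k, Nat.card ((Gr i).ConnectedComponent) := by
    set σ : ℕ → Σ i : Fin k, (Gr i).ConnectedComponent :=
      fun t => ⟨I t, (Gr (I t)).connectedComponentMk (p.getVert t)⟩ with hσ
    set ψ : (Σ i : Fin k, (Gr i).ConnectedComponent) → Fin k × V :=
      fun x => (x.1, x.2.out) with hψ
    have hgψ : (Finset.range L).image g = ((Finset.range L).image σ).image ψ := by
      rw [Finset.image_image]
      rfl
    rw [hgψ]
    calc (((Finset.range L).image σ).image ψ).card
        ≤ ((Finset.range L).image σ).card := Finset.card_image_le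
      _ ≤ (Finset.univ : Finset (Σ i : Fin k, (Gr i).ConnectedComponent)).card :=
          Finset.card_le_univ _
      _ = Fintype.card (Σ i : Fin k, (Gr i).ConnectedComponent) := Finset.card_univ
      _ = ∑ i : Fin k, Fintype.card ((Gr i).ConnectedComponent) := Fintype.card_sigma
      _ = ∑ i : Fin k, Nat.card ((Gr i).ConnectedComponent) :=
          Finset.sum_congr rfl fun i _ => (Nat.card_eq_fintype_card).symm
  have hfinal : L ≤ d * c :=
    le_trans hmain (Nat.mul_le_mul_left d (le_trans himg hcb))
  have hfinal2 : d * c + 1 ≤ L := by rw [mul_comm]; exact hdist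
  exact Nat.not_succ_le_self (d * c) (hfinal2.trans hfinal)
end
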